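/- arXiv:1201.0607 — 6 statements merged into one kernel-verified Lean document; each statement's English description precedes it below -/
import Mathlib

section
/- Let d ≥ 2 and let A = (a_0,…,a_{d−1}) be a d-tuple of points in general position in ℝ². Then for all indices 0 ≤ s < t ≤ d−1 and 0 ≤ u < v ≤ d−1, one has ∫_0^1 Q_{st}(a_u + w(a_v − a_u)) dw = 1 if (u,v) = (s,t), and ∫_0^1 Q_{st}(a_u + w(a_v − a_u)) dw = 0 otherwise. -/
open Finset

/-- Euclidean scalar product on ℝ² ≅ ℂ. -/
noncomputable def inner2 (x y : ℂ) : ℝ := x.re * y.re + x.im * y.im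

/-- The univariate polynomial h_{st} associated to a tuple `a` of points of ℝ² ≅ ℂ:
`h_{st}(w) = ∏_{m=0, m≠s}^{d−1} (w − ⟨(a_s−a_t)^⊥, a_m⟩)`, where `x^⊥ = i·x`. -/
noncomputable def hPoly (d s t : ℕ) (a : ℕ → ℂ) : ℝ → ℝ :=
  fun w => ∏ m ∈ (Finset.range d).erase s, (w - inner2 (Complex.I * (a s - a t)) (a m))

/-- The points `a 0, …, a (d-1)` are in general position: no three of them are collinear. -/
def GenPos (d : ℕ) (a : ℕ → ℂ) : Prop :=
  ∀ i j k, i < d → j < d → k < d → i ≠ j → j ≠ k → i ≠ k →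
    ¬ Collinear ℝ ({a i, a j, a k} : Set ℂ)


/-- The polynomial `Q_{st}(x) = h′_{st}(⟨(a_s−a_t)^⊥, x⟩) / h′_{st}(⟨(a_s−a_t)^⊥, a_s⟩)`. -/
noncomputable def Qst (d s t : ℕ) (a : ℕ → ℂ) (x : ℂ) : ℝ :=
  deriv (hPoly d s t a) (inner2 (Complex.I * (a s - a t)) x) /
    deriv (hPoly d s t a) (inner2 (Complex.I * (a s - a t)) (a s))

/-- The scalar `c_m = ⟨(a_s−a_t)^⊥, a_m⟩`. -/
noncomputable def cc (s t : ℕ) (a : ℕ → ℂ) (m : ℕ) : ℝ :=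
  inner2 (Complex.I * (a s - a t)) (a m)

/-- `hPoly` as a genuine polynomial. -/
noncomputable def PP (d s t : ℕ) (a : ℕ → ℂ) : Polynomial ℝ :=
  ∏ m ∈ (Finset.range d).erase s, (Polynomial.X - Polynomial.C (cc s t a m))

lemma hPoly_eq (d s t : ℕ) (a : ℕ → ℂ) :
    hPoly d s t a = fun w => (PP d s t a).eval w := by
  funext w
  simp [hPoly, PP, Polynomial.eval_prod, cc]

lemma deriv_hPoly (d s t : ℕ) (a : ℕ → ℂ) (x : ℝ) :
    deriv (hPoly d s t a) x = (Polynomial.derivative (PP d s t a)).eval x := by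
  rw [hPoly_eq]
  simp

lemma derivative_finset_prod {ι : Type*} [DecidableEq ι] (s : Finset ι)
    (f : ι → Polynomial ℝ) :
    Polynomial.derivative (∏ i ∈ s, f i) =
      ∑ i ∈ s, (∏ j ∈ s.erase i, f j) * Polynomial.derivative (f i) := by
  induction s using Finset.induction_on with
  | empty => simp
  | @insert b s hb ih =>
    rw [Finset.prod_insert hb, Polynomial.derivative_mul, ih, Finset.mul_sum,
      Finset.sum_insert hb, Finset.erase_insert hb]
    congr 1
    · ring
    refine Finset.sum_congr rfl fun i hi => ?_
    rw [Finset.erase_insert_of_ne (ne_of_mem_of_not_mem hi hb).symm,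
      Finset.prod_insert (fun h => hb (Finset.mem_of_mem_erase h))]
    ring

lemma derivPP_eval (d s t : ℕ) (a : ℕ → ℂ) (x : ℝ) :
    (Polynomial.derivative (PP d s t a)).eval x =
      ∑ k ∈ (Finset.range d).erase s, ∏ m ∈ ((Finset.range d).erase s).erase k,
        (x - cc s t a m) := by
  rw [PP, derivative_finset_prod]
  simp [Polynomial.eval_finset_sum, Polynomial.eval_prod]

lemma cc_st (s t : ℕ) (a : ℕ → ℂ) : cc s t a s = cc s t a t := by
  simp only [cc, inner2, Complex.mul_re, Complex.mul_im, Complex.I_re, Complex.I_im,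
    Complex.sub_re, Complex.sub_im]
  ring

lemma collinear_aux (p q r : ℂ) (h : inner2 (Complex.I * (p - q)) (r - p) = 0) :
    Collinear ℝ ({p, q, r} : Set ℂ) := by
  rcases eq_or_ne p q with rfl | hpq
  · have h2 : ({p, p, r} : Set ℂ) = {p, r} := by simp
    rw [h2]; exact collinear_pair ℝ p r
  · have hz : p - q ≠ 0 := sub_ne_zero.mpr hpq
    have hz2 : (p - q).re ^ 2 + (p - q).im ^ 2 ≠ 0 := by
      have := Complex.normSq_pos.mpr hz
      rw [Complex.normSq_apply] at this
      nlinarith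
    have h' : -(p - q).im * (r - p).re + (p - q).re * (r - p).im = 0 := by
      simpa [inner2, Complex.mul_re, Complex.mul_im] using h
    rw [collinear_iff_of_mem (Set.mem_insert p _)]
    refine ⟨p - q, fun x hx => ?_⟩
    simp only [Set.mem_insert_iff, Set.mem_singleton_iff] at hx
    rcases hx with rfl | rfl | rfl
    · exact ⟨0, by simp⟩
    · exact ⟨-1, by push_cast [Complex.real_smul]; ring_nf; rw [vadd_eq_add]; ring⟩
    · have hz2' : (p.re - q.re) ^ 2 + (p.im - q.im) ^ 2 ≠ 0 := by
        simpa [Complex.sub_re, Complex.sub_im] using hz2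
      have h'' : -(p.im - q.im) * (x.re - p.re) + (p.re - q.re) * (x.im - p.im) = 0 := by
        simpa [Complex.sub_re, Complex.sub_im] using h'
      refine ⟨((x.re - p.re) * (p.re - q.re) + (x.im - p.im) * (p.im - q.im)) /
        ((p.re - q.re) ^ 2 + (p.im - q.im) ^ 2), ?_⟩
      rw [vadd_eq_add, Complex.real_smul]
      apply Complex.ext
      · simp only [Complex.add_re, Complex.mul_re, Complex.ofReal_re, Complex.ofReal_im,
          Complex.sub_re, Complex.sub_im]
        field_simp [hz2']
        linear_combination (-(p.im - q.im)) * h''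
      · simp only [Complex.add_im, Complex.mul_im, Complex.ofReal_re, Complex.ofReal_im,
          Complex.sub_re, Complex.sub_im]
        field_simp [hz2']
        linear_combination (p.re - q.re) * h''

lemma integral_helper (P : Polynomial ℝ) (α β : ℝ) :
    ∫ w in (0:ℝ)..1, (Polynomial.derivative P).eval (α + w * β) =
      if β = 0 then (Polynomial.derivative P).eval α
      else (P.eval (α + β) - P.eval α) / β := by
  rcases eq_or_ne β 0 with rfl | hβ
  · simp
  · rw [if_neg hβ]
    have hderiv : ∀ w : ℝ, HasDerivAt (fun w : ℝ => P.eval (α + w * β) / β)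
        ((Polynomial.derivative P).eval (α + w * β)) w := by
      intro w
      have h1 : HasDerivAt (fun w : ℝ => α + w * β) β w := by
        simpa using (hasDerivAt_id w).mul_const β |>.const_add α
      have h2 := (P.hasDerivAt (α + w * β)).comp w h1
      have h3 := h2.div_const β
      simpa [mul_div_assoc, mul_div_cancel_right₀ _ hβ] using h3
    have hcont : Continuous fun w : ℝ => (Polynomial.derivative P).eval (α + w * β) :=
      (Polynomial.derivative P).continuous.comp (by continuity)
    rw [intervalIntegral.integral_eq_sub_of_hasDerivAt (fun w _ => hderiv w)
      (hcont.intervalIntegrable 0 1)]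
    simp [sub_div]

theorem stmt3 (d : ℕ) (hd : 2 ≤ d) (a : ℕ → ℂ) (hgen : GenPos d a)
    (s t u v : ℕ) (hst : s < t) (ht : t < d) (huv : u < v) (hv : v < d) :
    ∫ w in (0:ℝ)..1, Qst d s t a (a u + (w : ℂ) * (a v - a u)) =
      if u = s ∧ v = t then 1 else 0 := by
  have hs : s < d := hst.trans ht
  have hu : u < d := huv.trans hv
  have htS : t ∈ (Finset.range d).erase s :=
    Finset.mem_erase.mpr ⟨hst.ne', Finset.mem_range.mpr ht⟩
  -- c m ≠ c s for indices m distinct from s,t (general position)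
  have hne : ∀ m, m < d → m ≠ s → m ≠ t → cc s t a m ≠ cc s t a s := by
    intro m hm hms hmt heq
    refine hgen s t m hs ht hm hst.ne (Ne.symm hmt) (Ne.symm hms)
      (collinear_aux (a s) (a t) (a m) ?_)
    have : inner2 (Complex.I * (a s - a t)) (a m - a s) = cc s t a m - cc s t a s := by
      simp only [cc, inner2, Complex.sub_re, Complex.sub_im]; ring
    rw [this, heq, sub_self]
  -- P vanishes at every c m, m < d
  have hPzero : ∀ m, m < d → (PP d s t a).eval (cc s t a m) = 0 := by
    intro m hm
    rw [PP, Polynomial.eval_prod]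
    rcases eq_or_ne m s with rfl | hms
    · exact Finset.prod_eq_zero htS (by simp [cc_st])
    · exact Finset.prod_eq_zero
        (Finset.mem_erase.mpr ⟨hms, Finset.mem_range.mpr hm⟩) (by simp)
  -- denominator nonzero
  have hDne : (Polynomial.derivative (PP d s t a)).eval (cc s t a s) ≠ 0 := by
    rw [derivPP_eval]
    rw [Finset.sum_eq_single_of_mem t htS (fun k hk hkt =>
      Finset.prod_eq_zero (Finset.mem_erase.mpr ⟨Ne.symm hkt, htS⟩)
        (sub_eq_zero.mpr (cc_st s t a)))]
    refine Finset.prod_ne_zero_iff.mpr fun m hm => ?_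
    have hm1 := Finset.mem_erase.mp hm
    have hm2 := Finset.mem_erase.mp hm1.2
    exact sub_ne_zero.mpr (Ne.symm (hne m (Finset.mem_range.mp hm2.2) hm2.1 hm1.1))
  -- the scalar argument along the segment
  have hlin : ∀ w : ℝ, inner2 (Complex.I * (a s - a t)) (a u + (w : ℂ) * (a v - a u)) =
      cc s t a u + w * (cc s t a v - cc s t a u) := by
    intro w
    simp only [cc, inner2, Complex.add_re, Complex.add_im, Complex.mul_re, Complex.mul_im,
      Complex.sub_re, Complex.sub_im, Complex.ofReal_re, Complex.ofReal_im]
    ring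
  have hQ : ∀ w : ℝ, Qst d s t a (a u + (w : ℂ) * (a v - a u)) =
      (Polynomial.derivative (PP d s t a)).eval
        (cc s t a u + w * (cc s t a v - cc s t a u)) /
      (Polynomial.derivative (PP d s t a)).eval (cc s t a s) := by
    intro w
    simp only [Qst, deriv_hPoly, hlin]
    rfl
  simp only [hQ]
  rw [intervalIntegral.integral_div, integral_helper (PP d s t a) (cc s t a u)
    (cc s t a v - cc s t a u)]
  have hcv : cc s t a u + (cc s t a v - cc s t a u) = cc s t a v := by ring
  rw [hcv, hPzero u hu, hPzero v hv]
  rcases eq_or_ne (cc s t a v - cc s t a u) 0 with hβ | hβ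
  · rw [if_pos hβ]
    have hβ' : cc s t a v = cc s t a u := by linarith [sub_eq_zero.mp hβ]
    by_cases huvst : u = s ∧ v = t
    · obtain ⟨rfl, rfl⟩ := huvst
      rw [if_pos ⟨rfl, rfl⟩, div_self hDne]
    · rw [if_neg huvst]
      rcases eq_or_ne u s with rfl | hus
      · exact absurd (hβ'.trans rfl) (hne v hv huv.ne' fun h => huvst ⟨rfl, h⟩)
      · rcases eq_or_ne v s with rfl | hvs
        · exact absurd hβ'.symm (hne u hu hus (huv.trans hst).ne)
        · have huS : u ∈ (Finset.range d).erase s :=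
            Finset.mem_erase.mpr ⟨hus, Finset.mem_range.mpr hu⟩
          have hvS : v ∈ (Finset.range d).erase s :=
            Finset.mem_erase.mpr ⟨hvs, Finset.mem_range.mpr hv⟩
          rw [derivPP_eval, div_eq_zero_iff]
          left
          refine Finset.sum_eq_zero fun k hk => ?_
          rcases eq_or_ne k u with rfl | hku
          · exact Finset.prod_eq_zero (Finset.mem_erase.mpr ⟨huv.ne', hvS⟩)
              (by rw [hβ', sub_self])
          · exact Finset.prod_eq_zero (Finset.mem_erase.mpr ⟨Ne.symm hku, huS⟩)
              (by simp)
  · rw [if_neg hβ]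
    have hnot : ¬(u = s ∧ v = t) := by
      rintro ⟨rfl, rfl⟩
      exact hβ (sub_eq_zero.mpr (cc_st u v a).symm)
    rw [if_neg hnot]
    simp
end

section
/- Let E = (e_n : n ∈ ℕ) be a Leja sequence for the closed unit disk D with e_0 = 1. Then for every n ∈ ℕ, the set {e_0, e_1, …, e_{2^n−1}} is exactly the set of all 2^n-th roots of unity, i.e. {e_j : 0 ≤ j ≤ 2^n−1} = {z ∈ ℂ : z^{2^n} = 1}. -/
/-!
Leja points are pairwise distinct and lie on the unit circle: by the maximum modulus principle,
an interior maximum of `|∏_{j<d} (z - e j)|` would make it constant, yet it vanishes at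
`e 0 = 1`. By strong induction, `e (2l+1) = -e (2l)`: if the earlier points come in antipodal
pairs, then `∏_{j<2l} |z - e j|` is an even function of `z`, so `z = -e (2l)` competes with
`e (2l+1)` and forces `|e (2l+1) - e (2l)| ≥ 2`. Pairing turns `∏_{j<2l} |z - e j|` into
`∏_{j<l} |z² - e (2j)²|`, so `j ↦ e (2j)²` is again a Leja sequence, and induction on `n` shows
`e j ^ 2ⁿ = 1` for `j < 2ⁿ`. These are `2ⁿ` distinct roots of unity, hence all of them.
-/

open Finset

/-- `e` is a Leja sequence for the closed unit disk `D` with `e 0 = 1`: all points lie in `D`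
and for every `d ≥ 1` the product `∏_{j<d} |z - e j|` over `z ∈ D` is maximized at `z = e d`. -/
def IsLejaSeq (e : ℕ → ℂ) : Prop :=
  e 0 = 1 ∧ (∀ n, ‖e n‖ ≤ 1) ∧
    ∀ d : ℕ, 1 ≤ d → ∀ z : ℂ, ‖z‖ ≤ 1 →
      ∏ j ∈ Finset.range d, ‖z - e j‖ ≤
        ∏ j ∈ Finset.range d, ‖e d - e j‖

theorem eq_neg_of_two_le_norm_sub {E : Type*} [NormedAddCommGroup E] [InnerProductSpace ℝ E]
    {a b : E} (ha : ‖a‖ ≤ 1) (hb : ‖b‖ ≤ 1) (hab : 2 ≤ ‖a - b‖) : a = -b := by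
  have hpar := parallelogram_law_with_norm ℝ a b
  have hsum : ‖a + b‖ = 0 := by
    nlinarith [norm_nonneg a, norm_nonneg b, norm_nonneg (a + b)]
  exact eq_neg_of_add_eq_zero_left (norm_eq_zero.1 hsum)

theorem prod_range_two_mul_norm_sub_of_antipodal {w : ℕ → ℂ} {l : ℕ}
    (hw : ∀ j < l, w (2 * j + 1) = -w (2 * j)) (z : ℂ) :
    ∏ j ∈ range (2 * l), ‖z - w j‖ = ∏ j ∈ range l, ‖z ^ 2 - w (2 * j) ^ 2‖ := by
  induction l with
  | zero => simp
  | succ l ih =>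
    rw [Nat.mul_succ, prod_range_succ, prod_range_succ, prod_range_succ,
      ih fun j hj => hw j (by omega), hw l l.lt_succ_self, mul_assoc, ← norm_mul]
    congr 2
    ring

namespace IsLejaSeq

variable {e : ℕ → ℂ}

theorem norm_le_one (he : IsLejaSeq e) (n : ℕ) : ‖e n‖ ≤ 1 :=
  he.2.1 n

theorem prod_le (he : IsLejaSeq e) (d : ℕ) {z : ℂ} (hz : ‖z‖ ≤ 1) :
    ∏ j ∈ range d, ‖z - e j‖ ≤ ∏ j ∈ range d, ‖e d - e j‖ := by
  rcases Nat.eq_zero_or_pos d with rfl | hd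
  · simp
  · exact he.2.2 d hd z hz

theorem prod_pos (he : IsLejaSeq e) (d : ℕ) : 0 < ∏ j ∈ range d, ‖e d - e j‖ := by
  obtain ⟨z, hz, hze⟩ : (Metric.closedBall (0 : ℂ) 1 \ (range d).image e).Nonempty :=
    ((infinite_of_mem_nhds 0 (Metric.closedBall_mem_nhds 0 one_pos)).sdiff
      (finite_toSet _)).nonempty
  refine (Finset.prod_pos fun j hj => ?_).trans_le (he.prod_le d (mem_closedBall_zero_iff.1 hz))
  exact norm_pos_iff.2 (sub_ne_zero.2 fun h => hze (h ▸ mem_image_of_mem e hj))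

theorem injective (he : IsLejaSeq e) : Function.Injective e := by
  refine Function.Injective.of_lt_imp_ne fun j i hji hij => (he.prod_pos i).ne' ?_
  exact Finset.prod_eq_zero (mem_range.2 hji) (by simp [hij])

theorem norm_eq_one (he : IsLejaSeq e) (d : ℕ) : ‖e d‖ = 1 := by
  rcases Nat.eq_zero_or_pos d with rfl | hd
  · simp [he.1]
  refine (he.norm_le_one d).antisymm (not_lt.1 fun hlt => ?_)
  set p : ℂ → ℂ := fun z => ∏ j ∈ range d, (z - e j)
  have hmax : IsMaxOn (norm ∘ p) (Metric.ball 0 1) (e d) := fun z hz => by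
    simpa [p, norm_prod] using he.prod_le d (mem_ball_zero_iff.1 hz).le
  have hconst := Complex.norm_eqOn_closure_of_isPreconnected_of_isMaxOn
    (convex_ball 0 1).isPreconnected Metric.isOpen_ball
    (Differentiable.diffContOnCl (by fun_prop)) (mem_ball_zero_iff.2 hlt) hmax
    (show (1 : ℂ) ∈ closure (Metric.ball 0 1) by simp [closure_ball])
  have hp1 : p 1 = 0 := Finset.prod_eq_zero (mem_range.2 hd) (by simp [he.1])
  have hpos := he.prod_pos d
  simp [hp1, p, norm_prod] at hconst
  linarith

theorem odd_eq_neg (he : IsLejaSeq e) (l : ℕ) : e (2 * l + 1) = -e (2 * l) := by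
  induction l using Nat.strong_induction_on with
  | _ l ih =>
  set P : ℂ → ℝ := fun z => ∏ j ∈ range (2 * l), ‖z - e j‖
  have hP_even : P (-e (2 * l)) = P (e (2 * l)) := by
    simp only [P, prod_range_two_mul_norm_sub_of_antipodal ih, neg_sq]
  have hsucc (z : ℂ) : ∏ j ∈ range (2 * l + 1), ‖z - e j‖ = P z * ‖z - e (2 * l)‖ :=
    prod_range_succ _ _
  have hantipode : ‖-e (2 * l) - e (2 * l)‖ = 2 := by
    rw [← neg_add', norm_neg, ← two_mul, norm_mul, he.norm_eq_one, Complex.norm_two, mul_one]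
  have hleja := he.prod_le (2 * l + 1) (z := -e (2 * l)) (by simpa using he.norm_le_one _)
  rw [hsucc, hsucc, hP_even, hantipode] at hleja
  have hprev : P (e (2 * l + 1)) ≤ P (e (2 * l)) := he.prod_le (2 * l) (he.norm_le_one _)
  have hfar : 2 ≤ ‖e (2 * l + 1) - e (2 * l)‖ :=
    le_of_mul_le_mul_left (hleja.trans (by gcongr)) (he.prod_pos (2 * l))
  exact eq_neg_of_two_le_norm_sub (he.norm_le_one _) (he.norm_le_one _) hfar

theorem even_sq (he : IsLejaSeq e) : IsLejaSeq fun j => e (2 * j) ^ 2 := by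
  refine ⟨by simp [he.1], fun n => by simp [he.norm_eq_one], fun d _ ζ hζ => ?_⟩
  obtain ⟨s, rfl⟩ := IsAlgClosed.exists_pow_nat_eq ζ two_pos
  have hs : ‖s‖ ≤ 1 := by
    rw [norm_pow] at hζ
    exact (pow_le_one_iff_of_nonneg (norm_nonneg s) two_ne_zero).1 hζ
  simpa only [prod_range_two_mul_norm_sub_of_antipodal fun j _ => he.odd_eq_neg j]
    using he.prod_le (2 * d) hs

theorem pow_two_pow_eq_one (he : IsLejaSeq e) (n : ℕ) {j : ℕ} (hj : j < 2 ^ n) :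
    e j ^ 2 ^ n = 1 := by
  induction n generalizing e j with
  | zero => simp [Nat.lt_one_iff.1 hj, he.1]
  | succ n ih =>
    have hsq : e j ^ 2 = e (2 * (j / 2)) ^ 2 := by
      obtain ⟨l, rfl | rfl⟩ := Nat.even_or_odd' j
      · rw [Nat.mul_div_cancel_left l two_pos]
      · rw [he.odd_eq_neg, neg_sq, show (2 * l + 1) / 2 = l by omega]
    rw [pow_succ', pow_mul, hsq]
    exact ih he.even_sq (by omega)

end IsLejaSeq

theorem stmt8 (e : ℕ → ℂ) (he : IsLejaSeq e) (n : ℕ) :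
    {z : ℂ | ∃ j < 2 ^ n, e j = z} = {z : ℂ | z ^ (2 ^ n) = 1} := by
  have hpos : 0 < 2 ^ n := by positivity
  have hroots : (range (2 ^ n)).image e = Polynomial.nthRootsFinset (2 ^ n) (1 : ℂ) := by
    refine eq_of_subset_of_card_le (fun z hz => ?_) ?_
    · obtain ⟨j, hj, rfl⟩ := mem_image.1 hz
      exact (Polynomial.mem_nthRootsFinset hpos 1).2 (he.pow_two_pow_eq_one n (mem_range.1 hj))
    · rw [card_image_of_injective _ he.injective, card_range,
        (Complex.isPrimitiveRoot_exp _ hpos.ne').card_nthRootsFinset]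
  ext z
  simpa [Polynomial.mem_nthRootsFinset hpos] using congrArg (z ∈ ·) hroots
end

section
/- Let E = (e_n : n ∈ ℕ) be a Leja sequence for the closed unit disk D with e_0 = 1 and let n ∈ ℕ. Then there exist ρ ∈ ℂ with ρ^{2^n} = −1 and a Leja sequence E' = (e'_k : k ∈ ℕ) for D with e'_0 = 1 such that e_{2^n + k} = ρ · e'_k for all 0 ≤ k ≤ 2^n − 1. -/
/-!
By induction on `n`, the first `2 ^ n` points of a Leja sequence starting at `1` are the
`2 ^ n`-th roots of unity: `∏_{j < 2 ^ n} (z - e j) = z ^ 2 ^ n - 1`. Writing `N = 2 ^ n`, the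
point `ρ = e N` then maximizes `|z ^ N - 1|` on the disk, which forces `ρ ^ N = -1`, and for
`k < N` the product `∏_{j < N + k} |ρ w - e j|` factors as `|w ^ N + 1| · ∏_{j < k} |w - e' j|`
with `e' j = e (N + j) / ρ`. The second factor is maximized at an `N`-th root of unity (the
`k`-th point of any Leja continuation of `e'`), where the first factor attains its maximum `2`;
so the points `e' k` are Leja points again, and the two halves multiply to `z ^ 2N - 1`.
Leja prefixes continue to full Leja sequences greedily, by compactness of the disk.
-/

open Finset

open Metric

lemma norm_eq_one_of_pow_eq_neg_one {𝕜 : Type*} [NormedDivisionRing 𝕜] {z : 𝕜} {N : ℕ}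
    (hN : N ≠ 0) (h : z ^ N = -1) : ‖z‖ = 1 :=
  (pow_eq_one_iff_of_nonneg (norm_nonneg z) hN).1 (by rw [← norm_pow, h, norm_neg, norm_one])

lemma ne_zero_of_pow_eq_neg_one {R : Type*} [Ring R] [Nontrivial R] {z : R} {N : ℕ}
    (hN : N ≠ 0) (h : z ^ N = -1) : z ≠ 0 :=
  ne_zero_pow hN (by rw [h]; exact neg_ne_zero.2 one_ne_zero)

lemma eq_neg_one_of_norm_le_one_of_two_le_norm_sub_one {a : ℂ} (h1 : ‖a‖ ≤ 1)
    (h2 : 2 ≤ ‖a - 1‖) : a = -1 := by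
  have hsq : a.re * a.re + a.im * a.im ≤ 1 := by
    rw [← Complex.normSq_apply, ← Complex.sq_norm]; nlinarith [norm_nonneg a]
  have hsq' : 4 ≤ (a.re - 1) * (a.re - 1) + a.im * a.im := by
    have : (a - 1).normSq = _ := Complex.normSq_apply (a - 1)
    simp only [Complex.sub_re, Complex.sub_im, Complex.one_re, Complex.one_im, sub_zero] at this
    rw [← this, ← Complex.sq_norm]; nlinarith
  apply Complex.ext <;>
    simp only [Complex.neg_re, Complex.one_re, Complex.neg_im, Complex.one_im, neg_zero] <;>
    nlinarith

lemma isMaxOn_norm_pow_add_one {N : ℕ} {w : ℂ} (hw : w ^ N = 1) :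
    IsMaxOn (fun z : ℂ => ‖z ^ N + 1‖) (closedBall 0 1) w := fun z hz => by
  have hz1 : ‖z ^ N‖ ≤ 1 := by
    rw [norm_pow]; exact pow_le_one₀ (norm_nonneg z) (mem_closedBall_zero_iff.1 hz)
  calc ‖z ^ N + 1‖ ≤ ‖z ^ N‖ + ‖(1 : ℂ)‖ := norm_add_le _ _
    _ ≤ 1 + 1 := by rw [norm_one]; gcongr
    _ = ‖w ^ N + 1‖ := by rw [hw]; norm_num

lemma IsMaxOn.of_isMaxOn_mul {α : Type*} {s : Set α} {f g : α → ℝ} {x w : α}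
    (hx : IsMaxOn (fun z => g z * f z) s x) (hxs : x ∈ s) (hfx : 0 ≤ f x)
    (hf : IsMaxOn f s w) (hg : IsMaxOn g s w) (hws : w ∈ s) (hgw : 0 < g w) :
    IsMaxOn f s x := fun z hz => by
  have hwx : g w * f w ≤ g w * f x :=
    (hx hws).trans (mul_le_mul_of_nonneg_right (hg hxs) hfx)
  exact (hf hz).trans (le_of_mul_le_mul_left hwx hgw)

noncomputable def lejaProd (e : ℕ → ℂ) (s : ℕ) (z : ℂ) : ℝ := ∏ j ∈ range s, ‖z - e j‖

def IsLejaPoint (e : ℕ → ℂ) (s : ℕ) : Prop :=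
  e s ∈ closedBall (0 : ℂ) 1 ∧ IsMaxOn (lejaProd e s) (closedBall 0 1) (e s)

def IsLejaPrefix (e : ℕ → ℂ) (d : ℕ) : Prop :=
  e 0 = 1 ∧ ∀ s < d, IsLejaPoint e s

lemma lejaProd_congr {e e' : ℕ → ℂ} {s : ℕ} (h : ∀ j < s, e j = e' j) :
    lejaProd e s = lejaProd e' s :=
  funext fun _ => prod_congr rfl fun j hj => by rw [h j (mem_range.1 hj)]

lemma isLejaPoint_zero {e : ℕ → ℂ} (h : e 0 = 1) : IsLejaPoint e 0 :=
  ⟨by simp [h], fun _ _ => by simp [lejaProd]⟩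

lemma isLejaSeq_iff {e : ℕ → ℂ} : IsLejaSeq e ↔ ∀ d, IsLejaPrefix e d := by
  constructor
  · rintro ⟨h0, hD, hmax⟩ d
    refine ⟨h0, fun s _ => ⟨mem_closedBall_zero_iff.2 (hD s), fun z hz => ?_⟩⟩
    rcases Nat.eq_zero_or_pos s with rfl | hs
    · simp [lejaProd]
    · exact hmax s hs z (mem_closedBall_zero_iff.1 hz)
  · intro h
    have hpt : ∀ s, IsLejaPoint e s := fun s => (h (s + 1)).2 s (lt_add_one s)
    exact ⟨(h 0).1, fun s => mem_closedBall_zero_iff.1 (hpt s).1,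
      fun s _ z hz => (hpt s).2 (mem_closedBall_zero_iff.2 hz)⟩

namespace IsLejaPrefix

variable {e : ℕ → ℂ} {d : ℕ}

lemma mono {d' : ℕ} (h : IsLejaPrefix e d) (hd : d' ≤ d) : IsLejaPrefix e d' :=
  ⟨h.1, fun s hs => h.2 s (hs.trans_le hd)⟩

lemma of_forall (h0 : e 0 = 1) (h : ∀ k < d, IsLejaPrefix e k → IsLejaPoint e k) :
    IsLejaPrefix e d := by
  induction d with
  | zero => exact ⟨h0, by simp⟩
  | succ d ih =>
    have hd := ih fun k hk => h k (by omega)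
    refine ⟨h0, fun s hs => ?_⟩
    rcases Nat.lt_succ_iff_lt_or_eq.1 hs with hs | rfl
    · exact hd.2 s hs
    · exact h s hs hd

end IsLejaPrefix

lemma exists_isMaxOn_lejaProd (e : ℕ → ℂ) (s : ℕ) :
    ∃ z ∈ closedBall (0 : ℂ) 1, IsMaxOn (lejaProd e s) (closedBall 0 1) z :=
  (isCompact_closedBall 0 1).exists_isMaxOn ⟨0, by simp⟩
    (by unfold lejaProd; fun_prop)

noncomputable def lejaStep (e : ℕ → ℂ) (s : ℕ) : ℂ :=
  (exists_isMaxOn_lejaProd e s).choose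

-- Truncating below `n` makes the recursion well founded and does not change `lejaProd _ n`.
noncomputable def lejaExtend (e : ℕ → ℂ) (d n : ℕ) : ℂ :=
  if n < d then e n else lejaStep (fun j => if j < n then lejaExtend e d j else 0) n
termination_by n

lemma lejaExtend_of_lt {e : ℕ → ℂ} {d n : ℕ} (h : n < d) : lejaExtend e d n = e n := by
  rw [lejaExtend, if_pos h]

lemma isLejaPoint_lejaExtend {e : ℕ → ℂ} {d : ℕ} (he : ∀ s < d, IsLejaPoint e s) (n : ℕ) :
    IsLejaPoint (lejaExtend e d) n := by
  by_cases hn : n < d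
  · rw [IsLejaPoint, lejaExtend_of_lt hn, lejaProd_congr fun j hj => lejaExtend_of_lt (hj.trans hn)]
    exact he n hn
  · have htrunc : lejaProd (fun j => if j < n then lejaExtend e d j else 0) n =
        lejaProd (lejaExtend e d) n :=
      lejaProd_congr fun j hj => if_pos hj
    rw [IsLejaPoint, lejaExtend, if_neg hn, ← htrunc]
    exact (exists_isMaxOn_lejaProd _ n).choose_spec

lemma IsLejaPrefix.exists_isLejaSeq {e : ℕ → ℂ} {d : ℕ} (h : IsLejaPrefix e d) :
    ∃ e', IsLejaSeq e' ∧ ∀ j < d, e' j = e j := by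
  have he : ∀ s < max d 1, IsLejaPoint e s := fun s hs => by
    by_cases hsd : s < d
    · exact h.2 s hsd
    · obtain rfl : s = 0 := by omega
      exact isLejaPoint_zero h.1
  refine ⟨lejaExtend e (max d 1), isLejaSeq_iff.2 fun _ => ⟨?_, fun s _ => ?_⟩,
    fun j hj => lejaExtend_of_lt (by omega)⟩
  · rw [lejaExtend_of_lt (by omega), h.1]
  · exact isLejaPoint_lejaExtend he s

section NodePolynomial

variable {e : ℕ → ℂ} {N : ℕ}

lemma lejaProd_eq_norm_pow_sub_one (hnode : ∀ z, ∏ j ∈ range N, (z - e j) = z ^ N - 1) (z : ℂ) :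
    lejaProd e N z = ‖z ^ N - 1‖ := by
  rw [lejaProd, ← norm_prod, hnode]

lemma IsLejaPoint.pow_eq_neg_one (hN : 0 < N)
    (hnode : ∀ z, ∏ j ∈ range N, (z - e j) = z ^ N - 1) (h : IsLejaPoint e N) :
    e N ^ N = -1 := by
  obtain ⟨z₀, hz₀⟩ := IsAlgClosed.exists_pow_nat_eq (-1 : ℂ) hN
  have hz₀D : z₀ ∈ closedBall (0 : ℂ) 1 := by
    simp [norm_eq_one_of_pow_eq_neg_one hN.ne' hz₀]
  have h2 : 2 ≤ ‖e N ^ N - 1‖ := by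
    have hmax : lejaProd e N z₀ ≤ lejaProd e N (e N) := h.2 hz₀D
    rw [lejaProd_eq_norm_pow_sub_one hnode, lejaProd_eq_norm_pow_sub_one hnode, hz₀] at hmax
    norm_num at hmax
    exact hmax
  refine eq_neg_one_of_norm_le_one_of_two_le_norm_sub_one ?_ h2
  rw [norm_pow]
  exact pow_le_one₀ (norm_nonneg _) (mem_closedBall_zero_iff.1 h.1)

lemma IsLejaPrefix.exists_pow_eq_one_isMaxOn {k : ℕ}
    (hA : ∀ E, IsLejaPrefix E N → ∀ z, ∏ j ∈ range N, (z - E j) = z ^ N - 1)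
    (h : IsLejaPrefix e k) (hk : k < N) :
    ∃ w ∈ closedBall (0 : ℂ) 1, w ^ N = 1 ∧ IsMaxOn (lejaProd e k) (closedBall 0 1) w := by
  obtain ⟨E, hE, hEe⟩ := h.exists_isLejaSeq
  have hEk := (isLejaSeq_iff.1 hE (k + 1)).2 k (lt_add_one k)
  refine ⟨E k, hEk.1, ?_, by rw [← lejaProd_congr hEe]; exact hEk.2⟩
  have hroot := hA E (isLejaSeq_iff.1 hE N) (E k)
  rw [prod_eq_zero (mem_range.2 hk) (sub_self _)] at hroot
  exact sub_eq_zero.1 hroot.symm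

lemma IsLejaPrefix.shift (hN : 0 < N)
    (hA : ∀ E, IsLejaPrefix E N → ∀ z, ∏ j ∈ range N, (z - E j) = z ^ N - 1)
    (h : IsLejaPrefix e (N + N)) (hρ : e N ^ N = -1) :
    IsLejaPrefix (fun k => e (N + k) / e N) N := by
  set ρ := e N
  have hρ1 : ‖ρ‖ = 1 := norm_eq_one_of_pow_eq_neg_one hN.ne' hρ
  have hρ0 : ρ ≠ 0 := ne_zero_of_pow_eq_neg_one hN.ne' hρ
  set e' := fun k => e (N + k) / ρ
  have hscale : ∀ k w, lejaProd e (N + k) (ρ * w) = ‖w ^ N + 1‖ * lejaProd e' k w := by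
    intro k w
    have hfirst : lejaProd e N (ρ * w) = ‖w ^ N + 1‖ := by
      rw [lejaProd_eq_norm_pow_sub_one (hA e (h.mono (by omega))), mul_pow, hρ,
        show -1 * w ^ N - 1 = -(w ^ N + 1) by ring, norm_neg]
    rw [lejaProd, prod_range_add, ← lejaProd, hfirst, lejaProd]
    congr 1
    refine prod_congr rfl fun j _ => ?_
    rw [show ρ * w - e (N + j) = ρ * (w - e' j) by simp [e', mul_sub, mul_div_cancel₀ _ hρ0],
      norm_mul, hρ1, one_mul]
  refine IsLejaPrefix.of_forall (div_self hρ0) fun k hk hpre => ?_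
  have hpt := h.2 (N + k) (by omega)
  have hmem : e' k ∈ closedBall (0 : ℂ) 1 := by
    simpa [e', norm_div, hρ1] using hpt.1
  have hweighted : IsMaxOn (fun w => ‖w ^ N + 1‖ * lejaProd e' k w) (closedBall 0 1) (e' k) := by
    have := hpt.2.comp_mapsTo (g := (ρ * ·)) (t := closedBall 0 1) (b := e' k)
      (fun w hw => by simpa [norm_mul, hρ1] using hw) (mul_div_cancel₀ _ hρ0)
    simpa only [Function.comp_def, hscale] using this
  obtain ⟨w₀, hw₀D, hw₀N, hw₀⟩ := hpre.exists_pow_eq_one_isMaxOn hA hk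
  exact ⟨hmem, hweighted.of_isMaxOn_mul hmem (prod_nonneg fun _ _ => norm_nonneg _) hw₀
    (isMaxOn_norm_pow_add_one hw₀N) hw₀D (by rw [hw₀N]; norm_num)⟩

lemma prod_sub_eq_pow_add_sub_one (hN : 0 < N)
    (hnode : ∀ z, ∏ j ∈ range N, (z - e j) = z ^ N - 1) (hρ : e N ^ N = -1)
    (hnode' : ∀ z, ∏ j ∈ range N, (z - e (N + j) / e N) = z ^ N - 1) (z : ℂ) :
    ∏ j ∈ range (N + N), (z - e j) = z ^ (N + N) - 1 := by
  have hρ0 : e N ≠ 0 := ne_zero_of_pow_eq_neg_one hN.ne' hρ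
  have hsecond : ∏ j ∈ range N, (z - e (N + j)) = z ^ N + 1 := by
    calc ∏ j ∈ range N, (z - e (N + j))
        = ∏ j ∈ range N, (e N * (z / e N - e (N + j) / e N)) :=
          prod_congr rfl fun j _ => by field_simp
      _ = e N ^ N * ((z / e N) ^ N - 1) := by rw [prod_mul_distrib, prod_const, card_range, hnode']
      _ = z ^ N + 1 := by rw [div_pow, mul_sub, mul_div_cancel₀ _ (pow_ne_zero N hρ0), hρ]; ring
  rw [prod_range_add, hnode, hsecond]
  ring

end NodePolynomial

theorem IsLejaPrefix.prod_sub_eq_pow_sub_one {n : ℕ} {e : ℕ → ℂ} (h : IsLejaPrefix e (2 ^ n))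
    (z : ℂ) : ∏ j ∈ range (2 ^ n), (z - e j) = z ^ 2 ^ n - 1 := by
  induction n generalizing e z with
  | zero => simp [h.1]
  | succ n ih =>
    rw [pow_succ, mul_two] at h ⊢
    have hN : 0 < 2 ^ n := by positivity
    have hnode := ih (h.mono (by omega))
    have hρ := (h.2 (2 ^ n) (by omega)).pow_eq_neg_one hN hnode
    exact prod_sub_eq_pow_add_sub_one hN hnode hρ (ih (h.shift hN (fun _ hE => ih hE) hρ)) z

theorem stmt9 (e : ℕ → ℂ) (he : IsLejaSeq e) (n : ℕ) :
    ∃ ρ : ℂ, ρ ^ (2 ^ n) = -1 ∧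
      ∃ e' : ℕ → ℂ, IsLejaSeq e' ∧ ∀ k < 2 ^ n, e (2 ^ n + k) = ρ * e' k := by
  have hN : 0 < 2 ^ n := by positivity
  have h := isLejaSeq_iff.1 he (2 ^ n + 2 ^ n)
  have hρ := (h.2 (2 ^ n) (by omega)).pow_eq_neg_one hN (h.mono (by omega)).prod_sub_eq_pow_sub_one
  obtain ⟨e', he', hee'⟩ :=
    (h.shift hN (fun _ hE => hE.prod_sub_eq_pow_sub_one) hρ).exists_isLejaSeq
  refine ⟨e (2 ^ n), hρ, e', he', fun k hk => ?_⟩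
  rw [hee' k hk, mul_div_cancel₀ _ (ne_zero_of_pow_eq_neg_one hN.ne' hρ)]
end

section
/- Let n ≥ 1, let 0 ≤ j ≤ n−1 and let β, φ ∈ ℝ with sin(β + 2jπ/n) ≠ 0. Then ∏_{m=0, m≠j}^{n−1} |cos φ − cos(β + 2mπ/n)| ≤ 2n / (2^{n−1} · |sin(β + 2jπ/n)|). -/
open Finset Real Filter Topology

/-!
Write `θₘ = β + 2mπ/n`. With `u = e^{iφ}`, `c = e^{iβ}` and `ζ = e^{2πi/n}`, the points
`e^{iθₘ} = ζᵐc` are the roots of `Xⁿ - cⁿ`, and `2 (cos φ - cos θₘ) = -(ζᵐc)⁻¹ (u - ζᵐc) (u⁻¹ - ζᵐc)`.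
Multiplying over `m` gives `∏ₘ 2 (cos φ - cos θₘ) = 2 (cos nφ - cos nβ)`. Removing the factor
`m = j` leaves `2ⁿ⁻¹ P · |cos φ - cos θⱼ| = |cos nφ - cos nθⱼ|` for the product `P` of the claim,
and the half-angle formula together with `|sin nx| ≤ n |sin x|` bounds the right side by
`2n |cos φ - cos θⱼ| / |sin θⱼ|`. Cancelling proves the claim when `cos φ ≠ cos θⱼ`; the remaining
case follows by continuity in `φ`.
-/

lemma IsPrimitiveRoot.prod_sub_pow_mul {R : Type*} [CommRing R] [IsDomain R] {n : ℕ} {ζ : R}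
    (hζ : IsPrimitiveRoot ζ n) (hn : 0 < n) (z c : R) :
    ∏ m ∈ range n, (z - ζ ^ m * c) = z ^ n - c ^ n := by
  simpa [Polynomial.eval_prod] using
    (congrArg (Polynomial.eval z) (X_pow_sub_C_eq_prod hζ hn rfl)).symm

lemma add_inv_sub_add_inv {K : Type*} [Field K] {u v : K} (hu : u ≠ 0) (hv : v ≠ 0) :
    u + u⁻¹ - (v + v⁻¹) = (-v)⁻¹ * ((u - v) * (u⁻¹ - v)) := by
  field_simp
  ring

lemma IsPrimitiveRoot.prod_add_inv_sub_add_inv {K : Type*} [Field K] {n : ℕ} {ζ : K}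
    (hζ : IsPrimitiveRoot ζ n) (hn : 0 < n) {u c : K} (hu : u ≠ 0) (hc : c ≠ 0) :
    ∏ m ∈ range n, (u + u⁻¹ - (ζ ^ m * c + (ζ ^ m * c)⁻¹)) =
      u ^ n + (u ^ n)⁻¹ - (c ^ n + (c ^ n)⁻¹) := by
  have hζc (m : ℕ) : ζ ^ m * c ≠ 0 := mul_ne_zero (pow_ne_zero _ (hζ.ne_zero hn.ne')) hc
  -- `z = 0` in `prod_sub_pow_mul`: the product of the roots of `Xⁿ - cⁿ`
  have hroots : ∏ m ∈ range n, -(ζ ^ m * c) = -c ^ n := by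
    simpa [zero_pow hn.ne'] using hζ.prod_sub_pow_mul hn 0 c
  rw [prod_congr rfl fun m _ => add_inv_sub_add_inv hu (hζc m), prod_mul_distrib,
    prod_mul_distrib, prod_inv_distrib, hroots, hζ.prod_sub_pow_mul hn,
    hζ.prod_sub_pow_mul hn, add_inv_sub_add_inv (pow_ne_zero _ hu) (pow_ne_zero _ hc), inv_pow]

lemma ofReal_two_mul_cos (x : ℝ) :
    ((2 * cos x : ℝ) : ℂ) = Complex.exp (x * Complex.I) + (Complex.exp (x * Complex.I))⁻¹ := by
  rw [← Complex.exp_neg, ← neg_mul]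
  push_cast
  exact Complex.two_cos _

lemma prod_two_mul_cos_sub_cos {n : ℕ} (hn : 0 < n) (φ β : ℝ) :
    ∏ m ∈ range n, (2 * (cos φ - cos (β + 2 * m * π / n))) = 2 * (cos (n * φ) - cos (n * β)) := by
  have hζ := Complex.isPrimitiveRoot_exp n hn.ne'
  have hroot (m : ℕ) : Complex.exp (2 * π * Complex.I / n) ^ m * Complex.exp (β * Complex.I) =
      Complex.exp ((β + 2 * m * π / n : ℝ) * Complex.I) := by
    rw [← Complex.exp_nat_mul, ← Complex.exp_add]
    push_cast
    ring_nf
  have hpow (x : ℝ) : Complex.exp (x * Complex.I) ^ n = Complex.exp ((n * x : ℝ) * Complex.I) := by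
    rw [← Complex.exp_nat_mul]
    push_cast
    ring_nf
  apply Complex.ofReal_injective
  simp only [mul_sub, Complex.ofReal_prod, Complex.ofReal_sub, ofReal_two_mul_cos, ← hroot,
    ← hpow]
  exact hζ.prod_add_inv_sub_add_inv hn (Complex.exp_ne_zero _) (Complex.exp_ne_zero _)

lemma abs_sin_nat_mul_le (n : ℕ) (x : ℝ) : |sin (n * x)| ≤ n * |sin x| := by
  induction n with
  | zero => simp
  | succ k ih =>
    rw [Nat.cast_succ, add_mul, one_mul, sin_add]
    calc |sin (k * x) * cos x + cos (k * x) * sin x|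
        ≤ |sin (k * x)| * |cos x| + |cos (k * x)| * |sin x| := by
          rw [← abs_mul, ← abs_mul]; exact abs_add_le _ _
      _ ≤ |sin (k * x)| * 1 + 1 * |sin x| := by
          gcongr <;> exact abs_cos_le_one _
      _ ≤ (k + 1) * |sin x| := by linarith

lemma abs_sin_sub_le (x y : ℝ) : |sin (x - y)| ≤ |sin x| + |sin y| := by
  rw [sin_sub]
  calc |sin x * cos y - cos x * sin y| ≤ |sin x| * |cos y| + |cos x| * |sin y| := by
        rw [← abs_mul, ← abs_mul]; exact abs_sub _ _
    _ ≤ |sin x| * 1 + 1 * |sin y| := by gcongr <;> exact abs_cos_le_one _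
    _ = |sin x| + |sin y| := by ring

lemma abs_cos_sub_cos (x y : ℝ) :
    |cos x - cos y| = 2 * (|sin ((x + y) / 2)| * |sin ((x - y) / 2)|) := by
  rw [cos_sub_cos, abs_mul, abs_mul, abs_neg, abs_two, mul_assoc]

lemma abs_cos_nat_mul_sub_mul_abs_sin_le (n : ℕ) (φ θ : ℝ) :
    |cos (n * φ) - cos (n * θ)| * |sin θ| ≤ 2 * n * |cos φ - cos θ| := by
  set a := (φ + θ) / 2
  set b := (φ - θ) / 2
  have hθ : |sin θ| ≤ |sin a| + |sin b| := by
    simpa only [show a - b = θ by ring] using abs_sin_sub_le a b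
  have hna : |sin (n * a)| ≤ n * |sin a| := abs_sin_nat_mul_le n a
  have hnb : |sin (n * b)| ≤ n * |sin b| := abs_sin_nat_mul_le n b
  rw [abs_cos_sub_cos, abs_cos_sub_cos, show (n * φ + n * θ) / 2 = n * a by ring,
    show (n * φ - n * θ) / 2 = n * b by ring]
  calc 2 * (|sin (n * a)| * |sin (n * b)|) * |sin θ|
      ≤ 2 * (|sin (n * a)| * |sin (n * b)|) * (|sin a| + |sin b|) := by gcongr
    _ = 2 * (|sin (n * b)| * |sin a| * |sin (n * a)| + |sin (n * a)| * |sin b| * |sin (n * b)|) := by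
        ring
    _ ≤ 2 * (n * |sin b| * |sin a| * 1 + n * |sin a| * |sin b| * 1) := by
        gcongr <;> exact abs_sin_le_one _
    _ = 2 * n * (2 * (|sin a| * |sin b|)) := by ring

lemma cos_nat_mul_add_two_mul_pi_div {n : ℕ} (hn : n ≠ 0) (β : ℝ) (j : ℕ) :
    cos (n * (β + 2 * j * π / n)) = cos (n * β) := by
  rw [show n * (β + 2 * j * π / n) = n * β + (j : ℤ) * (2 * π) by field_simp; push_cast; ring,
    cos_add_int_mul_two_pi]

lemma abs_cos_sub_mul_prod_erase {n j : ℕ} (hj : j < n) (β t : ℝ) :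
    |cos t - cos (β + 2 * j * π / n)| *
        (2 ^ (n - 1) * ∏ m ∈ (range n).erase j, |cos t - cos (β + 2 * m * π / n)|) =
      |cos (n * t) - cos (n * β)| := by
  have h := congrArg abs (prod_two_mul_cos_sub_cos (j.zero_le.trans_lt hj) t β)
  rw [abs_prod, ← mul_prod_erase _ _ (mem_range.2 hj)] at h
  simp only [abs_mul, abs_two, prod_mul_distrib, prod_const, card_erase_of_mem (mem_range.2 hj),
    card_range] at h
  linear_combination h / 2

lemma prod_erase_le_of_cos_ne {n j : ℕ} (hj : j < n) {β : ℝ}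
    (hs : sin (β + 2 * j * π / n) ≠ 0) {t : ℝ} (ht : cos t ≠ cos (β + 2 * j * π / n)) :
    ∏ m ∈ (range n).erase j, |cos t - cos (β + 2 * m * π / n)| ≤
      2 * n / (2 ^ (n - 1) * |sin (β + 2 * j * π / n)|) := by
  set θ := β + 2 * j * π / n
  set P := ∏ m ∈ (range n).erase j, |cos t - cos (β + 2 * m * π / n)|
  have hs' : 0 < |sin θ| := abs_pos.2 hs
  rw [le_div_iff₀ (by positivity)]
  refine le_of_mul_le_mul_right ?_ (abs_pos.2 (sub_ne_zero.2 ht))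
  calc P * (2 ^ (n - 1) * |sin θ|) * |cos t - cos θ|
      = |cos t - cos θ| * (2 ^ (n - 1) * P) * |sin θ| := by ring
    _ = |cos (n * t) - cos (n * θ)| * |sin θ| := by
        rw [abs_cos_sub_mul_prod_erase hj, cos_nat_mul_add_two_mul_pi_div (by omega)]
    _ ≤ 2 * n * |cos t - cos θ| := abs_cos_nat_mul_sub_mul_abs_sin_le n t θ

lemma Continuous.le_of_forall_cos_ne {f : ℝ → ℝ} (hf : Continuous f) {φ c : ℝ} (hφ : sin φ ≠ 0)
    (h : ∀ t, cos t ≠ cos φ → f t ≤ c) : f φ ≤ c := by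
  have hne : ∀ᶠ t in 𝓝[≠] φ, cos t ≠ cos φ :=
    (hasDerivAt_cos φ).eventually_ne (neg_ne_zero.2 hφ)
  exact le_of_tendsto (hf.continuousAt.tendsto.mono_left nhdsWithin_le_nhds)
    (hne.mono h)

theorem stmt10_general (n : ℕ) (j : ℕ) (hj : j < n) (β φ : ℝ)
    (hs : Real.sin (β + 2 * j * Real.pi / n) ≠ 0) :
    ∏ m ∈ (Finset.range n).erase j, |Real.cos φ - Real.cos (β + 2 * m * Real.pi / n)| ≤
      2 * n / (2 ^ (n - 1) * |Real.sin (β + 2 * j * Real.pi / n)|) := by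
  by_cases hc : cos φ = cos (β + 2 * j * π / n)
  · have hsφ : sin φ ≠ 0 := by
      have hsq : sin φ ^ 2 = sin (β + 2 * j * π / n) ^ 2 := by rw [sin_sq, hc, ← sin_sq]
      exact fun h0 => hs (by simpa [h0] using hsq.symm)
    refine Continuous.le_of_forall_cos_ne
      (f := fun t => ∏ m ∈ (range n).erase j, |cos t - cos (β + 2 * m * π / n)|)
      (by fun_prop) hsφ fun t ht => ?_
    exact prod_erase_le_of_cos_ne hj hs (by rwa [← hc])
  · exact prod_erase_le_of_cos_ne hj hs hc

theorem stmt10 (n : ℕ) (hn : 1 ≤ n) (j : ℕ) (hj : j < n) (β φ : ℝ)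
    (hs : Real.sin (β + 2 * j * Real.pi / n) ≠ 0) :
    ∏ m ∈ (Finset.range n).erase j, |Real.cos φ - Real.cos (β + 2 * m * Real.pi / n)| ≤
      2 * n / (2 ^ (n - 1) * |Real.sin (β + 2 * j * Real.pi / n)|) :=
  stmt10_general n j hj β φ hs
end

section
/- Let r ≥ 1 and let n_0 > n_1 > ⋯ > n_r ≥ 0 be a strictly decreasing sequence of natural numbers. Let q_0,…,q_{r−1} ∈ ℤ and set φ_j = (2q_j + 1)π / 2^{n_j} for j = 0,…,r−1. Then for every φ ∈ ℝ, ∏_{j=0}^{r−1} |sin(2^{n_{j+1}−1}(φ − φ_0 − ⋯ − φ_j))| ≥ (1/2^{n_0 − n_r}) · |cos(2^{n_0−1} φ)|. -/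
open Finset Real

private lemma shift11 (t : ℝ) (q : ℤ) : |Real.cos (t + (2*q+1)*π/2)| = |Real.sin t| := by
  have h1 : (2*(q:ℝ)+1)*π/2 = q*π + π/2 := by ring
  rw [h1, ← add_assoc, Real.cos_add_pi_div_two, abs_neg, Real.sin_add,
    Real.sin_int_mul_pi]
  rw [mul_zero, add_zero, abs_mul, Real.abs_cos_int_mul_pi, mul_one]

private lemma sinpow11 (s : ℝ) : ∀ m : ℕ, 1 ≤ m →
    |Real.sin (2 ^ m * s)| ≤ 2 ^ m * |Real.cos s| * |Real.sin s| := by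
  intro m hm
  induction m with
  | zero => omega
  | succ m ih =>
    rcases Nat.lt_or_ge 1 (m+1) with h | h
    · have hm1 : 1 ≤ m := by omega
      have e : (2:ℝ)^(m+1) * s = 2 * (2^m * s) := by ring
      rw [e, Real.sin_two_mul, abs_mul, abs_mul, abs_two]
      calc 2 * |Real.sin (2^m*s)| * |Real.cos (2^m*s)|
          ≤ 2 * |Real.sin (2^m*s)| * 1 := by
            gcongr; exact Real.abs_cos_le_one _
        _ = 2 * |Real.sin (2^m*s)| := by ring
        _ ≤ 2 * (2 ^ m * |Real.cos s| * |Real.sin s|) := by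
            gcongr; exact ih hm1
        _ = 2 ^ (m+1) * |Real.cos s| * |Real.sin s| := by ring
    · have : m = 0 := by omega
      subst this
      norm_num
      rw [Real.sin_two_mul, abs_mul, abs_mul, abs_two]
      exact le_of_eq (by ring)

theorem stmt11 (r : ℕ) (hr : 1 ≤ r) (n : ℕ → ℕ) (hdec : ∀ j < r, n (j + 1) < n j)
    (q : ℕ → ℤ) (φv : ℕ → ℝ)
    (hφv : ∀ j < r, φv j = (2 * (q j : ℝ) + 1) * Real.pi / 2 ^ (n j)) (φ : ℝ) :
    (1 / 2 ^ (n 0 - n r)) * |Real.cos ((2 : ℝ) ^ ((n 0 : ℤ) - 1) * φ)| ≤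
      ∏ j ∈ Finset.range r,
        |Real.sin ((2 : ℝ) ^ ((n (j + 1) : ℤ) - 1) *
          (φ - ∑ i ∈ Finset.range (j + 1), φv i))| := by
  set ψ : ℕ → ℝ := fun k => φ - ∑ i ∈ Finset.range k, φv i with hψ
  -- monotonicity of n
  have mono : ∀ j ≤ r, ∀ i ≤ j, n j ≤ n i := by
    intro j
    induction j with
    | zero =>
      intro _ i hi
      have : i = 0 := Nat.le_zero.mp hi
      subst this; exact le_rfl
    | succ j ih =>
      intro hjr i hi
      have h1 : n (j+1) < n j := hdec j (by omega)
      rcases Nat.eq_or_lt_of_le hi with h | h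
      · subst h; exact le_rfl
      · exact le_trans (le_of_lt h1) (ih (by omega) i (by omega))
  -- per-step bound
  have step : ∀ j < r,
      |Real.cos ((2:ℝ) ^ ((n j : ℤ) - 1) * ψ j)| ≤
        2 ^ (n j - n (j+1)) *
          (|Real.cos ((2:ℝ) ^ ((n (j+1) : ℤ) - 1) * ψ (j+1))| *
           |Real.sin ((2:ℝ) ^ ((n (j+1) : ℤ) - 1) * ψ (j+1))|) := by
    intro j hj
    have hnj1 : 1 ≤ n j := by have := hdec j hj; omega
    have hsplit : ψ j = ψ (j+1) + φv j := by
      simp [hψ, Finset.sum_range_succ]; ring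
    have hpow : (2:ℝ) ^ ((n j : ℤ) - 1) * φv j = (2 * (q j : ℝ) + 1) * π / 2 := by
      rw [hφv j hj]
      have : (2:ℝ) ^ ((n j : ℤ) - 1) = 2 ^ (n j) / 2 := by
        rw [zpow_sub₀ (by norm_num : (2:ℝ) ≠ 0), zpow_natCast, zpow_one]
      rw [this]
      have h2 : (0:ℝ) < 2 ^ (n j) := by positivity
      field_simp
    have key : |Real.cos ((2:ℝ) ^ ((n j : ℤ) - 1) * ψ j)| =
        |Real.sin ((2:ℝ) ^ ((n j : ℤ) - 1) * ψ (j+1))| := by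
      rw [hsplit, mul_add, hpow, shift11]
    rw [key]
    set m := n j - n (j+1) with hm
    have hm1 : 1 ≤ m := by have := hdec j hj; omega
    have hexp : (2:ℝ) ^ ((n j : ℤ) - 1) =
        2 ^ m * (2:ℝ) ^ ((n (j+1) : ℤ) - 1) := by
      rw [← zpow_natCast (2:ℝ) m, ← zpow_add₀ (by norm_num : (2:ℝ) ≠ 0)]
      congr 1
      have : (m : ℤ) = (n j : ℤ) - (n (j+1) : ℤ) := by
        have := hdec j hj; omega
      omega
    rw [hexp, mul_assoc]
    calc |Real.sin (2 ^ m * ((2:ℝ) ^ ((n (j+1) : ℤ) - 1) * ψ (j+1)))|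
        ≤ 2 ^ m * |Real.cos ((2:ℝ) ^ ((n (j+1) : ℤ) - 1) * ψ (j+1))| *
            |Real.sin ((2:ℝ) ^ ((n (j+1) : ℤ) - 1) * ψ (j+1))| :=
          sinpow11 _ m hm1
      _ = _ := by ring
  -- main induction
  have main : ∀ k ≤ r,
      |Real.cos ((2:ℝ) ^ ((n 0 : ℤ) - 1) * φ)| ≤
        2 ^ (n 0 - n k) * |Real.cos ((2:ℝ) ^ ((n k : ℤ) - 1) * ψ k)| *
          ∏ j ∈ Finset.range k,
            |Real.sin ((2:ℝ) ^ ((n (j+1) : ℤ) - 1) * ψ (j+1))| := by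
    intro k hk
    induction k with
    | zero =>
      simp [hψ]
    | succ k ihk =>
      have hkr : k < r := by omega
      have h1 := ihk (by omega)
      calc |Real.cos ((2:ℝ) ^ ((n 0 : ℤ) - 1) * φ)|
          ≤ 2 ^ (n 0 - n k) * |Real.cos ((2:ℝ) ^ ((n k : ℤ) - 1) * ψ k)| *
              ∏ j ∈ Finset.range k,
                |Real.sin ((2:ℝ) ^ ((n (j+1) : ℤ) - 1) * ψ (j+1))| := h1
        _ ≤ 2 ^ (n 0 - n k) *
              (2 ^ (n k - n (k+1)) *
                (|Real.cos ((2:ℝ) ^ ((n (k+1) : ℤ) - 1) * ψ (k+1))| *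
                 |Real.sin ((2:ℝ) ^ ((n (k+1) : ℤ) - 1) * ψ (k+1))|)) *
              ∏ j ∈ Finset.range k,
                |Real.sin ((2:ℝ) ^ ((n (j+1) : ℤ) - 1) * ψ (j+1))| := by
            exact mul_le_mul_of_nonneg_right
              (mul_le_mul_of_nonneg_left (step k hkr) (by positivity))
              (Finset.prod_nonneg fun j _ => abs_nonneg _)
        _ = 2 ^ (n 0 - n (k+1)) *
              |Real.cos ((2:ℝ) ^ ((n (k+1) : ℤ) - 1) * ψ (k+1))| *
              ∏ j ∈ Finset.range (k+1),
                |Real.sin ((2:ℝ) ^ ((n (j+1) : ℤ) - 1) * ψ (j+1))| := by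
            rw [Finset.prod_range_succ]
            have he : (2:ℝ) ^ (n 0 - n k) * 2 ^ (n k - n (k+1)) =
                2 ^ (n 0 - n (k+1)) := by
              rw [← pow_add]
              congr 1
              have h2 := mono k (by omega) 0 (by omega)
              have h3 := hdec k hkr
              omega
            rw [← he]
            ring
  have hmain := main r le_rfl
  have hcos1 : |Real.cos ((2:ℝ) ^ ((n r : ℤ) - 1) * ψ r)| ≤ 1 :=
    Real.abs_cos_le_one _
  have hprodnn : (0:ℝ) ≤ ∏ j ∈ Finset.range r,
      |Real.sin ((2:ℝ) ^ ((n (j+1) : ℤ) - 1) * ψ (j+1))| :=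
    Finset.prod_nonneg fun j _ => abs_nonneg _
  have hfin : |Real.cos ((2:ℝ) ^ ((n 0 : ℤ) - 1) * φ)| ≤
      2 ^ (n 0 - n r) * ∏ j ∈ Finset.range r,
        |Real.sin ((2:ℝ) ^ ((n (j+1) : ℤ) - 1) * ψ (j+1))| := by
    calc |Real.cos ((2:ℝ) ^ ((n 0 : ℤ) - 1) * φ)| ≤ _ := hmain
      _ ≤ 2 ^ (n 0 - n r) * 1 * ∏ j ∈ Finset.range r,
            |Real.sin ((2:ℝ) ^ ((n (j+1) : ℤ) - 1) * ψ (j+1))| := by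
          gcongr
      _ = _ := by ring
  rw [div_mul_eq_mul_div, div_le_iff₀ (by positivity), one_mul]
  calc |Real.cos ((2:ℝ) ^ ((n 0 : ℤ) - 1) * φ)| ≤ _ := hfin
    _ = (∏ j ∈ Finset.range r,
          |Real.sin ((2:ℝ) ^ ((n (j+1) : ℤ) - 1) * ψ (j+1))|) *
          2 ^ (n 0 - n r) := by ring
end

section
/- Let E = (e_n : n ∈ ℕ) be a Leja sequence for the closed unit disk D with e_0 = 1, and let d ≥ 2 with binary expansion d = 2^{n_0} + ⋯ + 2^{n_r}, n_0 > ⋯ > n_r ≥ 0. Then for all 0 ≤ s < t ≤ d−1 and all x ∈ ℝ² with ‖x‖ ≤ 1, |h_{st}(⟨(e_s−e_t)^⊥, x⟩)| ≤ 2^{2r+1} · d · |e_s − e_t|^{d−2} / 2^{d−2}. -/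
/-!
The first `2^m` points of a Leja sequence `e` for the disk are the `2^m`-th roots of unity,
`e (2^m) ^ 2^m = -1`, and `e (2^m + j) = e (2^m) * ẽ j` where `ẽ` is again a Leja sequence
up to length `2^m`. Consequently the first `d = 2^n₀ + ⋯ + 2^n_r` points split into `r + 1`
consecutive blocks, the `j`-th one consisting of the roots of `z ^ 2^n_j - ρ_j`, `|ρ_j| = 1`.

With `u = e s - e t`, the line `⟨u^⊥, ·⟩ = w` (`|w| ≤ |u|`) meets the unit circle in two points
`z₁, z₂`, and `|w - ⟨u^⊥, ε⟩| = |u|/2 · |ε - z₁| |ε - z₂|` for `|ε| = 1`. A full block of size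
`N` therefore contributes at most `4 (|u|/2)^N` to `|h_{st}(w)|`, as `|zᵢ^N - ρ| ≤ 2`. In the
block of `s` the factor of `e s` is missing: the remaining product is a geometric sum, of
modulus `≤ N` at `z₁` and `≤ 2 / |z₂ - e s| ≤ 4 / |u|` at a suitably labelled `z₂`, because the
reflection in the line `ℝ u^⊥` swaps `e s, e t` as well as `z₁, z₂`.
-/

open Finset

open Complex ComplexConjugate

theorem norm_eq_one_of_pow_eq {ζ ρ : ℂ} {M : ℕ} (hM : M ≠ 0) (h : ζ ^ M = ρ) (hρ : ‖ρ‖ = 1) :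
    ‖ζ‖ = 1 :=
  (pow_eq_one_iff_of_nonneg (norm_nonneg ζ) hM).1 (by rw [← norm_pow, h, hρ])

theorem norm_pow_le_one {z : ℂ} (hz : ‖z‖ ≤ 1) (n : ℕ) : ‖z ^ n‖ ≤ 1 := by
  rw [norm_pow]
  exact pow_le_one₀ (norm_nonneg z) hz

theorem norm_sub_le_two {a b : ℂ} (ha : ‖a‖ ≤ 1) (hb : ‖b‖ ≤ 1) : ‖a - b‖ ≤ 2 :=
  (norm_sub_le a b).trans (by linarith)

theorem eq_neg_one_of_two_le_norm_sub_one {w : ℂ} (hw : ‖w‖ ≤ 1) (h : 2 ≤ ‖w - 1‖) : w = -1 := by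
  have h1 : normSq w ≤ 1 := by
    rw [normSq_eq_norm_sq]; nlinarith [norm_nonneg w]
  have h2 : 4 ≤ normSq (w - 1) := by
    rw [normSq_eq_norm_sq]; nlinarith
  simp only [normSq_apply, sub_re, sub_im, one_re, one_im, sub_zero] at h1 h2
  apply Complex.ext <;> simp <;> nlinarith

theorem mul_conj_eq_one {η : ℂ} (hη : ‖η‖ = 1) : η * conj η = 1 := by
  rw [Complex.mul_conj, Complex.normSq_eq_norm_sq, hη]; norm_num

theorem pow_two_pow_eq_one {ζ : ℂ} {μ k : ℕ} (h : ζ ^ 2 ^ μ = -1) (hμ : μ < k) :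
    ζ ^ 2 ^ k = 1 := by
  obtain ⟨i, rfl⟩ := Nat.exists_eq_add_of_lt hμ
  rw [add_assoc, pow_add, pow_mul, h, Even.neg_one_pow (Nat.even_pow.2 ⟨even_two, by omega⟩)]

noncomputable def nodePoly (g : ℕ → ℂ) (d : ℕ) (z : ℂ) : ℂ := ∏ j ∈ range d, (z - g j)

noncomputable def rotTail (g : ℕ → ℂ) (M : ℕ) (j : ℕ) : ℂ := g (M + j) / g M

theorem prod_sub_add_eq_pow_mul_prod (g : ℕ → ℂ) {M : ℕ} (h : g M ≠ 0) (S : Finset ℕ) (z : ℂ) :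
    ∏ j ∈ S, (z - g (M + j)) = g M ^ #S * ∏ j ∈ S, (z / g M - rotTail g M j) := by
  rw [← prod_const, ← prod_mul_distrib]
  refine prod_congr rfl fun j _ => ?_
  rw [rotTail]
  field_simp

theorem nodePoly_add (g : ℕ → ℂ) {M : ℕ} (h : g M ≠ 0) (d : ℕ) (z : ℂ) :
    nodePoly g (M + d) z = nodePoly g M z * (g M ^ d * nodePoly (rotTail g M) d (z / g M)) := by
  rw [nodePoly, prod_range_add, prod_sub_add_eq_pow_mul_prod g h, card_range]
  rfl

theorem norm_nodePoly_add (g : ℕ → ℂ) {M : ℕ} (h : ‖g M‖ = 1) (d : ℕ) (z : ℂ) :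
    ‖nodePoly g (M + d) z‖ = ‖nodePoly g M z‖ * ‖nodePoly (rotTail g M) d (z / g M)‖ := by
  rw [nodePoly_add g (norm_ne_zero_iff.1 (by rw [h]; exact one_ne_zero)), norm_mul, norm_mul,
    norm_pow, h, one_pow, one_mul]

def IsLejaTuple (g : ℕ → ℂ) (L : ℕ) : Prop :=
  g 0 = 1 ∧ (∀ j < L, ‖g j‖ ≤ 1) ∧
    ∀ d, 0 < d → d < L → ∀ z : ℂ, ‖z‖ ≤ 1 → ‖nodePoly g d z‖ ≤ ‖nodePoly g d (g d)‖

theorem IsLejaTuple.mono {g : ℕ → ℂ} {L K : ℕ} (hg : IsLejaTuple g L) (hK : K ≤ L) :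
    IsLejaTuple g K :=
  ⟨hg.1, fun j hj => hg.2.1 j (by omega), fun d hd hdK => hg.2.2 d hd (by omega)⟩

theorem IsLejaSeq.isLejaTuple {e : ℕ → ℂ} (he : IsLejaSeq e) (L : ℕ) : IsLejaTuple e L := by
  refine ⟨he.1, fun j _ => he.2.1 j, fun d hd _ z hz => ?_⟩
  simpa only [nodePoly, norm_prod] using he.2.2 d hd z hz

theorem IsLejaTuple.pow_eq_neg_one {g : ℕ → ℂ} {L M : ℕ} (hg : IsLejaTuple g L) (hM : 0 < M)
    (hML : M < L) (hfull : ∀ z, nodePoly g M z = z ^ M - 1) : g M ^ M = -1 := by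
  obtain ⟨ζ, hζ⟩ := IsAlgClosed.exists_pow_nat_eq (-1 : ℂ) hM
  have hζ1 : ‖ζ‖ = 1 := norm_eq_one_of_pow_eq hM.ne' hζ (by simp)
  have hmax := hg.2.2 M hM hML ζ hζ1.le
  rw [hfull, hfull, hζ] at hmax
  exact eq_neg_one_of_two_le_norm_sub_one (norm_pow_le_one (hg.2.1 M hML) M)
    (by norm_num at hmax ⊢; linarith)

/-- The Leja property of `g` at index `M + d`, tested against `g M * ζ` (where `|z ^ M - 1|`
attains its maximum `2`), gives the Leja property of the rotated tail at index `d`. -/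
theorem IsLejaTuple.norm_nodePoly_rotTail_le {g : ℕ → ℂ} {M L d : ℕ}
    (hg : IsLejaTuple g (M + L)) (hM : 0 < M) (hfull : ∀ z, nodePoly g M z = z ^ M - 1)
    (hρ : g M ^ M = -1) (hdL : d < L) {ζ : ℂ} (hζ : ζ ^ M = 1)
    (hζmax : ∀ z, ‖z‖ ≤ 1 → ‖nodePoly (rotTail g M) d z‖ ≤ ‖nodePoly (rotTail g M) d ζ‖)
    {w : ℂ} (hw : ‖w‖ ≤ 1) :
    ‖nodePoly (rotTail g M) d w‖ ≤ ‖nodePoly (rotTail g M) d (rotTail g M d)‖ := by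
  have hρ1 : ‖g M‖ = 1 := norm_eq_one_of_pow_eq hM.ne' hρ (by simp)
  have hρ0 : g M ≠ 0 := fun h => by simp [h] at hρ1
  have hζ1 : ‖ζ‖ = 1 := norm_eq_one_of_pow_eq hM.ne' hζ (by simp)
  have hleja := hg.2.2 (M + d) (by omega) (by omega) (g M * ζ) (by simp [hζ1, hρ1])
  rw [norm_nodePoly_add g hρ1, norm_nodePoly_add g hρ1, hfull, hfull, mul_pow, hρ, hζ,
    mul_div_cancel_left₀ ζ hρ0] at hleja
  have hrot : g (M + d) / g M = rotTail g M d := rfl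
  have hgMd : ‖g (M + d) ^ M - 1‖ ≤ 2 :=
    norm_sub_le_two (norm_pow_le_one (hg.2.1 _ (by omega)) M) (by simp)
  have h2 : ‖(-1 * 1 - 1 : ℂ)‖ = 2 := by norm_num
  rw [h2, hrot] at hleja
  have := mul_le_mul_of_nonneg_right hgMd
    (norm_nonneg (nodePoly (rotTail g M) d (rotTail g M d)))
  linarith [hζmax w hw]

theorem IsLejaTuple.isLejaTuple_rotTail {g : ℕ → ℂ} {M L : ℕ} (hg : IsLejaTuple g (M + L))
    (hM : 0 < M) (hL : 0 < L) (hfull : ∀ z, nodePoly g M z = z ^ M - 1)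
    (hpeak : ∀ d, 0 < d → d < L → IsLejaTuple (rotTail g M) d →
      ∃ ζ : ℂ, ζ ^ M = 1 ∧
        ∀ z, ‖z‖ ≤ 1 → ‖nodePoly (rotTail g M) d z‖ ≤ ‖nodePoly (rotTail g M) d ζ‖) :
    IsLejaTuple (rotTail g M) L := by
  have hρ := hg.pow_eq_neg_one hM (by omega) hfull
  have hρ1 : ‖g M‖ = 1 := norm_eq_one_of_pow_eq hM.ne' hρ (by simp)
  have hρ0 : g M ≠ 0 := fun h => by simp [h] at hρ1
  have hstart : rotTail g M 0 = 1 := by simp [rotTail, hρ0]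
  have hnorm : ∀ j < L, ‖rotTail g M j‖ ≤ 1 := fun j hj => by
    rw [rotTail, norm_div, hρ1, div_one]; exact hg.2.1 _ (by omega)
  suffices ∀ k ≤ L, IsLejaTuple (rotTail g M) k from this L le_rfl
  intro k
  induction k with
  | zero => exact fun _ => ⟨hstart, by simp, by simp⟩
  | succ k ih =>
    intro hk
    refine ⟨hstart, fun j hj => hnorm j (by omega), fun d hd hdk w hw => ?_⟩
    rcases Nat.lt_or_ge d k with hdk' | hdk'
    · exact (ih (by omega)).2.2 d hd hdk' w hw
    obtain rfl : d = k := by omega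
    obtain ⟨ζ, hζ, hζmax⟩ := hpeak d hd (by omega) (ih (by omega))
    exact hg.norm_nodePoly_rotTail_le hM hfull hρ (by omega) hζ hζmax hw

theorem exists_peak_of_nodePoly_eq {g : ℕ → ℂ} {M : ℕ} (hM : 0 < M)
    (hfull : ∀ z, nodePoly g M z = z ^ M - 1) :
    ∃ ζ : ℂ, ζ ^ M = -1 ∧ ∀ z, ‖z‖ ≤ 1 → ‖nodePoly g M z‖ ≤ ‖nodePoly g M ζ‖ := by
  obtain ⟨ζ, hζ⟩ := IsAlgClosed.exists_pow_nat_eq (-1 : ℂ) hM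
  refine ⟨ζ, hζ, fun z hz => ?_⟩
  rw [hfull, hfull, hζ]
  refine (norm_sub_le_two (norm_pow_le_one hz M) (by simp)).trans ?_
  norm_num

theorem norm_nodePoly_add_le_of_peak {g : ℕ → ℂ} {M L : ℕ} (hM : 0 < M)
    (hfull : ∀ z, nodePoly g M z = z ^ M - 1) (hρ : g M ^ M = -1) {ζ : ℂ} (hζ : ζ ^ M = 1)
    (hζmax : ∀ z, ‖z‖ ≤ 1 → ‖nodePoly (rotTail g M) L z‖ ≤ ‖nodePoly (rotTail g M) L ζ‖)
    {z : ℂ} (hz : ‖z‖ ≤ 1) :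
    ‖nodePoly g (M + L) z‖ ≤ ‖nodePoly g (M + L) (g M * ζ)‖ := by
  have hρ1 : ‖g M‖ = 1 := norm_eq_one_of_pow_eq hM.ne' hρ (by simp)
  have hρ0 : g M ≠ 0 := fun h => by simp [h] at hρ1
  rw [norm_nodePoly_add g hρ1, norm_nodePoly_add g hρ1, hfull, hfull, mul_pow, hρ, hζ,
    mul_div_cancel_left₀ ζ hρ0]
  have h2 : ‖(-1 * 1 - 1 : ℂ)‖ = 2 := by norm_num
  rw [h2]
  refine mul_le_mul (norm_sub_le_two (norm_pow_le_one hz M) (by simp)) (hζmax _ ?_)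
    (norm_nonneg _) zero_le_two
  rw [norm_div, hρ1, div_one]
  exact hz

theorem nodePoly_add_self {g : ℕ → ℂ} {M : ℕ} (hfull : ∀ z, nodePoly g M z = z ^ M - 1)
    (hρ : g M ^ M = -1) (htail : ∀ z, nodePoly (rotTail g M) M z = z ^ M - 1) (z : ℂ) :
    nodePoly g (M + M) z = z ^ (M + M) - 1 := by
  have hρ0 : g M ≠ 0 := fun h => by
    rw [h] at hρ
    rcases M with _ | M <;> norm_num at hρ
  rw [nodePoly_add g hρ0, hfull, htail, div_pow, hρ]
  ring

/-- The second conjunct, a maximizer of `‖nodePoly g L ·‖` on the disk that is a `2^k`-th root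
of unity for every `2^k > L`, is what lets the Leja property pass to rotated tails. -/
theorem IsLejaTuple.nodePoly_two_pow_and_peak (L : ℕ) :
    ∀ g : ℕ → ℂ, IsLejaTuple g L → 0 < L →
      (∀ k, 2 ^ k ≤ L → ∀ z, nodePoly g (2 ^ k) z = z ^ 2 ^ k - 1) ∧
      ∀ k, L < 2 ^ k → ∃ ζ : ℂ, ζ ^ 2 ^ k = 1 ∧
        ∀ z, ‖z‖ ≤ 1 → ‖nodePoly g L z‖ ≤ ‖nodePoly g L ζ‖ := by
  induction L using Nat.strong_induction_on with
  | _ L IH =>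
  intro g hg hL
  have hpeak : ∀ h d, 0 < d → d < L → IsLejaTuple h d → ∀ k, d < 2 ^ k → ∃ ζ : ℂ,
      ζ ^ 2 ^ k = 1 ∧ ∀ z, ‖z‖ ≤ 1 → ‖nodePoly h d z‖ ≤ ‖nodePoly h d ζ‖ :=
    fun h d hd hdL hh => (IH d hdL h hh hd).2
  have hfull : ∀ k, 2 ^ k ≤ L → ∀ z, nodePoly g (2 ^ k) z = z ^ 2 ^ k - 1 := by
    intro k
    induction k with
    | zero => intro _ z; simp [nodePoly, hg.1]
    | succ k ihk =>
      intro hk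
      rw [pow_succ, mul_two] at hk ⊢
      have hfk := ihk (by omega)
      have hg' := hg.mono hk
      have hk0 : 0 < 2 ^ k := by positivity
      have htail := hg'.isLejaTuple_rotTail (by positivity) (by positivity) hfk
        fun d hd hdk hh => hpeak _ d hd (by omega) hh k hdk
      exact nodePoly_add_self hfk (hg'.pow_eq_neg_one (by positivity) (by omega) hfk)
        ((IH _ (by omega) _ htail (by positivity)).1 k le_rfl)
  refine ⟨hfull, fun k hk => ?_⟩
  obtain ⟨m, hm⟩ : ∃ m, m = Nat.log 2 L := ⟨_, rfl⟩
  have hmL : 2 ^ m ≤ L := hm ▸ Nat.pow_log_le_self 2 hL.ne'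
  have hLm : L < 2 ^ (m + 1) := hm ▸ Nat.lt_pow_succ_log_self one_lt_two L
  have hmk : m < k := hm ▸ (Nat.log_lt_iff_lt_pow one_lt_two hL.ne').2 hk
  rcases hmL.eq_or_lt with hmL' | hmL'
  · obtain ⟨ζ, hζ, hζmax⟩ := exists_peak_of_nodePoly_eq (by positivity) (hfull m hmL)
    exact ⟨ζ, pow_two_pow_eq_one hζ hmk, hmL' ▸ hζmax⟩
  obtain ⟨L', rfl⟩ : ∃ L', L = 2 ^ m + L' := ⟨L - 2 ^ m, by omega⟩
  have hL'm : L' < 2 ^ m := by rw [pow_succ] at hLm; omega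
  have hpos : 0 < 2 ^ m := by positivity
  have htail := hg.isLejaTuple_rotTail hpos (by omega) (hfull m hmL)
    fun d hd hdL' hh => hpeak _ d hd (by omega) hh m (by omega)
  obtain ⟨ζ, hζ, hζmax⟩ := hpeak _ L' (by omega) (by omega) htail m hL'm
  have hρ := hg.pow_eq_neg_one hpos (by omega) (hfull m hmL)
  exact ⟨g (2 ^ m) * ζ, pow_two_pow_eq_one (by rw [mul_pow, hρ, hζ, mul_one]) hmk,
    fun z hz => norm_nodePoly_add_le_of_peak hpos (hfull m hmL) hρ hζ hζmax hz⟩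

theorem IsLejaTuple.nodePoly_two_pow {g : ℕ → ℂ} {L k : ℕ} (hg : IsLejaTuple g L)
    (hk : 2 ^ k ≤ L) (z : ℂ) : nodePoly g (2 ^ k) z = z ^ 2 ^ k - 1 :=
  (IsLejaTuple.nodePoly_two_pow_and_peak L g hg (lt_of_lt_of_le (by positivity) hk)).1 k hk z

theorem IsLejaTuple.isLejaTuple_rotTail_two_pow {g : ℕ → ℂ} {m L : ℕ}
    (hg : IsLejaTuple g (2 ^ m + L)) (hL : 0 < L) (hLm : L ≤ 2 ^ m) :
    IsLejaTuple (rotTail g (2 ^ m)) L :=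
  hg.isLejaTuple_rotTail (by positivity) hL (hg.nodePoly_two_pow (by omega))
    fun d hd hdL hh => (IsLejaTuple.nodePoly_two_pow_and_peak d _ hh hd).2 m (by omega)

theorem IsLejaSeq.norm_eq_one_s14 {e : ℕ → ℂ} (he : IsLejaSeq e) (m : ℕ) : ‖e m‖ = 1 := by
  have hroot := (he.isLejaTuple (2 ^ m)).nodePoly_two_pow le_rfl (e m)
  rw [nodePoly, prod_eq_zero (mem_range.2 m.lt_two_pow_self) (sub_self _), eq_comm,
    sub_eq_zero] at hroot
  exact norm_eq_one_of_pow_eq (by positivity) hroot norm_one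

def blockStart (N : ℕ → ℕ) (j : ℕ) : ℕ := ∑ i ∈ range j, N i

theorem blockStart_succ (N : ℕ → ℕ) (j : ℕ) : blockStart N (j + 1) = blockStart N j + N j :=
  sum_range_succ N j

theorem blockStart_succ' (N : ℕ → ℕ) (j : ℕ) :
    blockStart N (j + 1) = N 0 + blockStart (fun i => N (i + 1)) j := by
  rw [blockStart, sum_range_succ', add_comm]
  rfl

theorem blockStart_mono (N : ℕ → ℕ) : Monotone (blockStart N) :=
  fun _ _ h => sum_le_sum_of_subset (range_subset_range.2 h)

theorem eq_of_mem_Ico_blockStart {N : ℕ → ℕ} {i j s : ℕ}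
    (hi : s ∈ Ico (blockStart N i) (blockStart N (i + 1)))
    (hj : s ∈ Ico (blockStart N j) (blockStart N (j + 1))) : i = j := by
  rw [mem_Ico] at hi hj
  by_contra hij
  rcases Nat.lt_or_gt_of_ne hij with h | h
  · have := blockStart_mono N (show i + 1 ≤ j from h); omega
  · have := blockStart_mono N (show j + 1 ≤ i from h); omega

theorem range_blockStart_eq_biUnion (N : ℕ → ℕ) (R : ℕ) :
    range (blockStart N R) =
      (range R).biUnion fun j => Ico (blockStart N j) (blockStart N (j + 1)) := by
  induction R with
  | zero => simp [blockStart]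
  | succ R ih =>
    rw [range_add_one, biUnion_insert, ← ih, range_eq_Ico, range_eq_Ico, union_comm,
      Ico_union_Ico_eq_Ico (Nat.zero_le _) (blockStart_mono N R.le_succ)]

theorem prod_erase_range_blockStart {M : Type*} [CommMonoid M] (N : ℕ → ℕ) (R s : ℕ)
    (F : ℕ → M) :
    ∏ i ∈ (range (blockStart N R)).erase s, F i =
      ∏ j ∈ range R, ∏ i ∈ (Ico (blockStart N j) (blockStart N (j + 1))).erase s, F i := by
  rw [range_blockStart_eq_biUnion, erase_biUnion, prod_biUnion]
  intro i _ j _ hij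
  exact disjoint_left.2 fun x hx hx' =>
    hij (eq_of_mem_Ico_blockStart (mem_of_mem_erase hx) (mem_of_mem_erase hx'))

theorem blockStart_two_pow_lt {n : ℕ → ℕ} (r : ℕ) (hdec : ∀ j < r, n (j + 1) < n j) :
    blockStart (fun j => 2 ^ n j) (r + 1) < 2 ^ (n 0 + 1) := by
  induction r generalizing n with
  | zero => simp [blockStart, pow_succ]
  | succ r ih =>
    have htail := ih (n := fun j => n (j + 1)) fun j hj => hdec (j + 1) (by omega)
    have h10 : 2 ^ (n 1 + 1) ≤ 2 ^ n 0 := Nat.pow_le_pow_right two_pos (hdec 0 (by omega))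
    rw [zero_add] at htail
    rw [blockStart_succ', pow_succ]
    omega

theorem IsLejaTuple.prod_first_block {n : ℕ → ℕ} {g : ℕ → ℂ} {L : ℕ} (hg : IsLejaTuple g L)
    (hL : 2 ^ n 0 ≤ L) (z : ℂ) :
    ∏ i ∈ Ico (blockStart (fun j => 2 ^ n j) 0) (blockStart (fun j => 2 ^ n j) 1), (z - g i) =
      z ^ 2 ^ n 0 - 1 := by
  simpa [blockStart, ← range_eq_Ico, nodePoly] using hg.nodePoly_two_pow hL z

theorem IsLejaTuple.exists_prod_block {n : ℕ → ℕ} (r : ℕ) (hdec : ∀ j < r, n (j + 1) < n j)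
    {g : ℕ → ℂ} (hg : IsLejaTuple g (blockStart (fun j => 2 ^ n j) (r + 1))) {j : ℕ}
    (hj : j ≤ r) :
    ∃ ρ : ℂ, ‖ρ‖ = 1 ∧ ∀ z, ∏ i ∈ Ico (blockStart (fun j => 2 ^ n j) j)
      (blockStart (fun j => 2 ^ n j) (j + 1)), (z - g i) = z ^ 2 ^ n j - ρ := by
  induction r generalizing n g j with
  | zero =>
    obtain rfl : j = 0 := by omega
    exact ⟨1, norm_one, hg.prod_first_block le_rfl⟩
  | succ r ih =>
    rw [blockStart_succ'] at hg
    rcases j with _ | i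
    · exact ⟨1, norm_one, hg.prod_first_block (by omega)⟩
    have hL' := blockStart_two_pow_lt (n := fun j => n (j + 1)) r
      fun j hj => hdec (j + 1) (by omega)
    have h10 : 2 ^ (n 1 + 1) ≤ 2 ^ n 0 := Nat.pow_le_pow_right two_pos (hdec 0 (by omega))
    have hpos : 0 < blockStart (fun j => 2 ^ n (j + 1)) (r + 1) := by
      rw [blockStart_succ']; positivity
    rw [zero_add] at hL'
    set M := 2 ^ n 0
    set o := blockStart (fun j => 2 ^ n (j + 1))
    have htail := hg.isLejaTuple_rotTail_two_pow hpos (by omega)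
    have hρ := hg.pow_eq_neg_one (M := M) (by positivity) (by omega)
      (hg.nodePoly_two_pow (k := n 0) (by omega))
    have hρ1 : ‖g M‖ = 1 := norm_eq_one_of_pow_eq (by positivity) hρ (by simp)
    have hρ0 : g M ≠ 0 := fun h => by simp [h] at hρ1
    obtain ⟨ρ', hρ'1, hρ'⟩ := ih (fun j hj => hdec (j + 1) (by omega)) htail (j := i) (by omega)
    refine ⟨g M ^ 2 ^ n (i + 1) * ρ', by simp [hρ1, hρ'1], fun z => ?_⟩
    rw [blockStart_succ' _ (i + 1), blockStart_succ' _ i, add_comm M, add_comm M,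
      ← prod_Ico_add, prod_sub_add_eq_pow_mul_prod g hρ0, hρ', Nat.card_Ico, blockStart_succ,
      Nat.add_sub_cancel_left, div_pow]
    field_simp

theorem inner2_eq_re_conj_mul (x y : ℂ) : inner2 x y = (conj x * y).re := by
  simp [inner2, Complex.mul_re]

theorem abs_inner2_le (x y : ℂ) : |inner2 x y| ≤ ‖x‖ * ‖y‖ := by
  rw [inner2_eq_re_conj_mul]
  exact (Complex.abs_re_le_norm _).trans (by simp)

theorem norm_sub_mul_norm_sub_conj {η ζ : ℂ} (hη : ‖η‖ = 1) (hζ : ‖ζ‖ = 1) :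
    ‖η - ζ‖ * ‖η - conj ζ‖ = 2 * |ζ.re - η.re| := by
  have key : (η - ζ) * (η - conj ζ) = η * ((2 * (η.re - ζ.re) : ℝ) : ℂ) := by
    have hζre : ζ + conj ζ = 2 * (ζ.re : ℂ) := by rw [Complex.re_eq_add_conj]; ring
    have hηre : η + conj η = 2 * (η.re : ℂ) := by rw [Complex.re_eq_add_conj]; ring
    push_cast
    linear_combination (-η) * hζre + mul_conj_eq_one hζ - mul_conj_eq_one hη + η * hηre
  rw [← norm_mul, key, norm_mul, hη, one_mul, Complex.norm_real, Real.norm_eq_abs, abs_mul,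
    abs_two, abs_sub_comm]

/-- `z₁, z₂` are the points where the line `inner2 v · = w` meets the unit circle; they are
mirror images of each other in the line `ℝ v`. -/
theorem exists_chord {v : ℂ} (hv : v ≠ 0) {w : ℝ} (hw : |w| ≤ ‖v‖) :
    ∃ z₁ z₂ : ℂ, ‖z₁‖ = 1 ∧ ‖z₂‖ = 1 ∧ z₂ = v / conj v * conj z₁ ∧
      ∀ ε, ‖ε‖ = 1 → 2 * |w - inner2 v ε| = ‖v‖ * (‖ε - z₁‖ * ‖ε - z₂‖) := by
  have hv0 : 0 < ‖v‖ := norm_pos_iff.2 hv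
  set p := w / ‖v‖
  have hp : p ^ 2 ≤ 1 := by
    rw [div_pow, div_le_one (by positivity), ← sq_abs]
    exact pow_le_pow_left₀ (abs_nonneg w) hw 2
  set ζ : ℂ := ⟨p, √(1 - p ^ 2)⟩
  have hζ : ‖ζ‖ = 1 := by
    rw [Complex.norm_def, Complex.normSq_mk, Real.mul_self_sqrt (by linarith), ← sq]
    simp
  set u : ℂ := v / ‖v‖
  have hu : ‖u‖ = 1 := by simp [u, hv0.ne']
  refine ⟨u * ζ, u * conj ζ, by simp [hu, hζ], by simp [hu, hζ], ?_, fun ε hε => ?_⟩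
  · have : conj v ≠ 0 := by simpa using hv
    simp only [u, map_mul, map_div₀, Complex.conj_ofReal]
    field_simp
  set η := conj u * ε
  have hη : ‖η‖ = 1 := by simp [η, hu, hε]
  have hε : ε = u * η := by rw [← mul_assoc, mul_conj_eq_one hu, one_mul]
  have hsub : ∀ y, ‖ε - u * y‖ = ‖η - y‖ := fun y => by
    rw [hε, ← mul_sub, norm_mul, hu, one_mul]
  have hw : w = ‖v‖ * ζ.re := by simp only [ζ, p]; field_simp
  have hinner : inner2 v ε = ‖v‖ * η.re := by
    rw [inner2_eq_re_conj_mul, show conj v = ‖v‖ * conj u by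
      rw [map_div₀, Complex.conj_ofReal, mul_div_cancel₀ _ (by exact_mod_cast hv0.ne')],
      mul_assoc, Complex.re_ofReal_mul]
  rw [hsub, hsub, norm_sub_mul_norm_sub_conj hη hζ, hw, hinner, ← mul_sub, abs_mul,
    abs_of_pos hv0]
  ring

theorem norm_sub_le_norm_sub_add_norm_sub_reflection {a b z₁ z₂ : ℂ} (ha : ‖a‖ = 1)
    (hb : ‖b‖ = 1) (hab : a ≠ b)
    (hz : z₂ = Complex.I * (a - b) / conj (Complex.I * (a - b)) * conj z₁) :
    ‖a - b‖ ≤ ‖a - z₁‖ + ‖a - z₂‖ := by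
  set c := Complex.I * (a - b) / conj (Complex.I * (a - b))
  have hv : Complex.I * (a - b) ≠ 0 := mul_ne_zero Complex.I_ne_zero (sub_ne_zero.2 hab)
  have hc : ‖c‖ = 1 := by rw [norm_div, Complex.norm_conj, div_self (norm_ne_zero_iff.2 hv)]
  -- `z ↦ c * conj z` is the reflection in the line `ℝ (I * (a - b))`; it swaps `a` and `b`.
  have hcb : c * conj b = a := by
    have : conj (Complex.I * (a - b)) ≠ 0 := (map_ne_zero _).2 hv
    simp only [c]
    field_simp
    simp only [map_mul, map_sub, Complex.conj_I]
    linear_combination (-Complex.I) * mul_conj_eq_one hb + Complex.I * mul_conj_eq_one ha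
  have hfar : ‖a - z₂‖ = ‖b - z₁‖ := by
    rw [hz, ← hcb, ← mul_sub, ← map_sub, norm_mul, hc, one_mul, Complex.norm_conj]
  rw [hfar, norm_sub_rev b]
  exact norm_sub_le_norm_sub_add_norm_sub a z₁ b

theorem exists_chord_far {a b : ℂ} (ha : ‖a‖ = 1) (hb : ‖b‖ = 1) (hab : a ≠ b) {w : ℝ}
    (hw : |w| ≤ ‖a - b‖) :
    ∃ z₁ z₂ : ℂ, ‖z₁‖ = 1 ∧ ‖z₂‖ = 1 ∧ ‖a - b‖ / 2 ≤ ‖a - z₂‖ ∧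
      ∀ ε, ‖ε‖ = 1 → |w - inner2 (Complex.I * (a - b)) ε| =
        ‖a - b‖ / 2 * (‖ε - z₁‖ * ‖ε - z₂‖) := by
  have hv : Complex.I * (a - b) ≠ 0 := mul_ne_zero Complex.I_ne_zero (sub_ne_zero.2 hab)
  have hnorm : ‖Complex.I * (a - b)‖ = ‖a - b‖ := by simp
  obtain ⟨z₁, z₂, hz₁, hz₂, hz, hchord⟩ := exists_chord hv (w := w) (hnorm ▸ hw)
  have hsum := norm_sub_le_norm_sub_add_norm_sub_reflection ha hb hab hz
  have hchord' : ∀ ε, ‖ε‖ = 1 → |w - inner2 (Complex.I * (a - b)) ε| =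
      ‖a - b‖ / 2 * (‖ε - z₁‖ * ‖ε - z₂‖) := fun ε hε => by
    rw [← hnorm]; linarith [hchord ε hε]
  rcases le_total (‖a - b‖ / 2) ‖a - z₂‖ with hfar | hfar
  · exact ⟨z₁, z₂, hz₁, hz₂, hfar, hchord'⟩
  · exact ⟨z₂, z₁, hz₂, hz₁, by linarith, fun ε hε => by rw [hchord' ε hε, mul_comm ‖ε - z₁‖]⟩

section Blocks

variable {ι : Type*} {B : Finset ι} {η : ι → ℂ} {N : ℕ} {ρ : ℂ}

theorem eq_pow_of_prod_sub_eq (hB : ∀ z, ∏ i ∈ B, (z - η i) = z ^ N - ρ) {s : ι} (hs : s ∈ B) :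
    ρ = η s ^ N := by
  have h := hB (η s)
  rw [prod_eq_zero hs (sub_self _)] at h
  linear_combination h

theorem prod_norm_sub_mul_norm_sub_le_four (hB : ∀ z, ∏ i ∈ B, (z - η i) = z ^ N - ρ)
    (hρ : ‖ρ‖ = 1) {z₁ z₂ : ℂ} (hz₁ : ‖z₁‖ ≤ 1) (hz₂ : ‖z₂‖ ≤ 1) :
    ∏ i ∈ B, (‖η i - z₁‖ * ‖η i - z₂‖) ≤ 4 := by
  have hle : ∀ z : ℂ, ‖z‖ ≤ 1 → ∏ i ∈ B, ‖η i - z‖ ≤ 2 := fun z hz => by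
    simp_rw [norm_sub_rev (η _), ← norm_prod, hB]
    exact norm_sub_le_two (norm_pow_le_one hz N) hρ.le
  rw [prod_mul_distrib]
  nlinarith [hle z₁ hz₁, hle z₂ hz₂, prod_nonneg fun i (_ : i ∈ B) => norm_nonneg (η i - z₁)]

theorem norm_prod_erase_sub_le [DecidableEq ι] (hB : ∀ z, ∏ i ∈ B, (z - η i) = z ^ N - ρ)
    {s : ι} (hs : s ∈ B) (hηs : ‖η s‖ ≤ 1) {z : ℂ} (hz : ‖z‖ ≤ 1) :
    ‖∏ i ∈ B.erase s, (z - η i)‖ ≤ N := by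
  -- The product is `(z ^ N - η s ^ N) / (z - η s)` for `z ≠ η s`, and both sides are continuous.
  have hgeom : (fun z => ∏ i ∈ B.erase s, (z - η i)) =
      fun z => ∑ k ∈ range N, z ^ k * η s ^ (N - 1 - k) :=
    Continuous.ext_on (dense_compl_singleton (η s)) (by fun_prop) (by fun_prop) fun z hz =>
      mul_left_cancel₀ (sub_ne_zero.2 hz) <| by
        rw [mul_prod_erase B (fun i => z - η i) hs, hB, eq_pow_of_prod_sub_eq hB hs, mul_comm,
          geom_sum₂_mul]
  rw [congrFun hgeom z]
  refine (norm_sum_le _ _).trans ?_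
  calc ∑ k ∈ range N, ‖z ^ k * η s ^ (N - 1 - k)‖ ≤ ∑ _k ∈ range N, (1 : ℝ) := by
        refine sum_le_sum fun k _ => ?_
        rw [norm_mul]
        exact mul_le_one₀ (norm_pow_le_one hz k) (norm_nonneg _) (norm_pow_le_one hηs _)
    _ = N := by simp

theorem prod_erase_norm_sub_mul_norm_sub_le [DecidableEq ι]
    (hB : ∀ z, ∏ i ∈ B, (z - η i) = z ^ N - ρ) {s : ι} (hs : s ∈ B) (hηs : ‖η s‖ ≤ 1)
    {z₁ z₂ : ℂ} (hz₁ : ‖z₁‖ ≤ 1) (hz₂ : ‖z₂‖ ≤ 1) {b : ℝ} (hb : 0 < b) (hfar : b ≤ ‖η s - z₂‖) :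
    ∏ i ∈ B.erase s, (‖η i - z₁‖ * ‖η i - z₂‖) ≤ 2 * N / b := by
  simp_rw [prod_mul_distrib, norm_sub_rev (η _), ← norm_prod]
  have h₂ : ‖z₂ - η s‖ * ‖∏ i ∈ B.erase s, (z₂ - η i)‖ ≤ 2 := by
    rw [← norm_mul, mul_prod_erase B (fun i => z₂ - η i) hs, hB, eq_pow_of_prod_sub_eq hB hs]
    exact norm_sub_le_two (norm_pow_le_one hz₂ N) (norm_pow_le_one hηs N)
  rw [norm_sub_rev] at hfar
  rw [le_div_iff₀ hb]
  calc ‖∏ i ∈ B.erase s, (z₁ - η i)‖ * ‖∏ i ∈ B.erase s, (z₂ - η i)‖ * b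
      ≤ N * (‖z₂ - η s‖ * ‖∏ i ∈ B.erase s, (z₂ - η i)‖) := by
        rw [mul_comm ‖z₂ - η s‖, ← mul_assoc]
        gcongr
        exact norm_prod_erase_sub_le hB hs hηs hz₁
    _ ≤ 2 * N := by nlinarith [N.cast_nonneg (α := ℝ)]

end Blocks

theorem prod_erase_norm_sub_mul_norm_sub_le_of_blocks {η : ℕ → ℂ} {N : ℕ → ℕ} {R : ℕ}
    (hblock : ∀ j < R, ∃ ρ : ℂ, ‖ρ‖ = 1 ∧
      ∀ z, ∏ i ∈ Ico (blockStart N j) (blockStart N (j + 1)), (z - η i) = z ^ N j - ρ)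
    {s : ℕ} (hs : s < blockStart N R) (hηs : ‖η s‖ ≤ 1) {z₁ z₂ : ℂ} (hz₁ : ‖z₁‖ ≤ 1)
    (hz₂ : ‖z₂‖ ≤ 1) {b : ℝ} (hb : 0 < b) (hfar : b ≤ ‖η s - z₂‖) :
    ∏ i ∈ (range (blockStart N R)).erase s, (‖η i - z₁‖ * ‖η i - z₂‖) ≤
      4 ^ (R - 1) * (2 * blockStart N R / b) := by
  obtain ⟨j₀, hj₀, hsj₀⟩ := mem_biUnion.1 (range_blockStart_eq_biUnion N R ▸ mem_range.2 hs)
  rw [prod_erase_range_blockStart, ← mul_prod_erase _ _ hj₀, mul_comm]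
  have hdef : ∏ i ∈ (Ico (blockStart N j₀) (blockStart N (j₀ + 1))).erase s,
      (‖η i - z₁‖ * ‖η i - z₂‖) ≤ 2 * blockStart N R / b := by
    obtain ⟨ρ, -, hρ⟩ := hblock j₀ (mem_range.1 hj₀)
    refine (prod_erase_norm_sub_mul_norm_sub_le hρ hsj₀ hηs hz₁ hz₂ hb hfar).trans ?_
    gcongr
    have := blockStart_mono N (show j₀ + 1 ≤ R from mem_range.1 hj₀)
    rw [blockStart_succ] at this
    exact_mod_cast (Nat.le_add_left _ _).trans this
  have hfull : ∏ j ∈ (range R).erase j₀,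
      ∏ i ∈ (Ico (blockStart N j) (blockStart N (j + 1))).erase s, (‖η i - z₁‖ * ‖η i - z₂‖) ≤
        4 ^ (R - 1) := by
    refine (prod_le_prod (g := fun _ => (4 : ℝ))
      (fun j _ => prod_nonneg fun i _ => by positivity) fun j hj => ?_).trans_eq
        (by rw [prod_const, card_erase_of_mem hj₀, card_range])
    have hsj : s ∉ Ico (blockStart N j) (blockStart N (j + 1)) := fun h =>
      (mem_erase.1 hj).1 (eq_of_mem_Ico_blockStart h hsj₀)
    obtain ⟨ρ, hρ1, hρ⟩ := hblock j (mem_range.1 (mem_erase.1 hj).2)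
    rw [erase_eq_of_notMem hsj]
    exact prod_norm_sub_mul_norm_sub_le_four hρ hρ1 hz₁ hz₂
  exact mul_le_mul hfull hdef (prod_nonneg fun i _ => by positivity) (by positivity)

theorem IsLejaSeq.prod_erase_norm_sub_mul_norm_sub_le {e : ℕ → ℂ} (he : IsLejaSeq e) {r : ℕ}
    {n : ℕ → ℕ} (hdec : ∀ j < r, n (j + 1) < n j) {d : ℕ}
    (hbin : d = ∑ j ∈ range (r + 1), 2 ^ n j) {s : ℕ} (hs : s < d) {z₁ z₂ : ℂ}
    (hz₁ : ‖z₁‖ ≤ 1) (hz₂ : ‖z₂‖ ≤ 1) {b : ℝ} (hb : 0 < b) (hfar : b ≤ ‖e s - z₂‖) :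
    ∏ m ∈ (range d).erase s, (‖e m - z₁‖ * ‖e m - z₂‖) ≤ 4 ^ r * (2 * d / b) := by
  subst hbin
  exact prod_erase_norm_sub_mul_norm_sub_le_of_blocks (R := r + 1)
    (fun j hj => (he.isLejaTuple _).exists_prod_block r hdec (by omega)) hs
    (he.norm_eq_one_s14 s).le hz₁ hz₂ hb hfar

theorem stmt14_general (e : ℕ → ℂ) (he : IsLejaSeq e) (d r : ℕ) (n : ℕ → ℕ)
    (hdec : ∀ j < r, n (j + 1) < n j)
    (hbin : d = ∑ j ∈ Finset.range (r + 1), 2 ^ (n j))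
    (s t : ℕ) (hst : s < t) (ht : t < d)
    (x : ℂ) (hx : ‖x‖ ≤ 1) :
    |hPoly d s t e (inner2 (Complex.I * (e s - e t)) x)| ≤
      2 ^ (2 * r + 1) * d * ‖e s - e t‖ ^ ((d : ℤ) - 2) / 2 ^ (d - 2) := by
  have hsd : s < d := hst.trans ht
  set w := inner2 (Complex.I * (e s - e t)) x
  by_cases heq : e s = e t
  · have hzero : hPoly d s t e w = 0 :=
      prod_eq_zero (mem_erase.2 ⟨hst.ne', mem_range.2 ht⟩) (by simp [w, heq, inner2])
    rw [hzero, abs_zero]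
    positivity
  have hw : |w| ≤ ‖e s - e t‖ := (abs_inner2_le _ _).trans <| by
    simpa using mul_le_of_le_one_right (norm_nonneg (e s - e t)) hx
  obtain ⟨z₁, z₂, hz₁, hz₂, hfar, hfactor⟩ :=
    exists_chord_far (he.norm_eq_one_s14 s) (he.norm_eq_one_s14 t) heq hw
  set b := ‖e s - e t‖ / 2
  have hb : 0 < b := half_pos (norm_pos_iff.2 (sub_ne_zero.2 heq))
  have hprod : |hPoly d s t e w| =
      b ^ (d - 1) * ∏ m ∈ (range d).erase s, (‖e m - z₁‖ * ‖e m - z₂‖) := by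
    rw [hPoly, abs_prod, prod_congr rfl fun m _ => hfactor (e m) (he.norm_eq_one_s14 m),
      prod_mul_distrib, prod_const, card_erase_of_mem (mem_range.2 hsd), card_range]
  have hblocks := he.prod_erase_norm_sub_mul_norm_sub_le hdec hbin hsd hz₁.le hz₂.le hb hfar
  obtain ⟨k, rfl⟩ : ∃ k, d = k + 2 := ⟨d - 2, by omega⟩
  rw [hprod, show ((k + 2 : ℕ) : ℤ) - 2 = k by push_cast; ring, zpow_natCast,
    show k + 2 - 1 = k + 1 by omega, Nat.add_sub_cancel]
  calc b ^ (k + 1) * ∏ m ∈ (range (k + 2)).erase s, (‖e m - z₁‖ * ‖e m - z₂‖)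
      ≤ b ^ (k + 1) * (4 ^ r * (2 * (k + 2 : ℕ) / b)) := by gcongr
    _ = _ := by
      rw [div_pow, pow_succ _ (2 * r), pow_mul]
      field_simp
      ring

theorem stmt14 (e : ℕ → ℂ) (he : IsLejaSeq e) (d r : ℕ) (n : ℕ → ℕ)
    (hd : 2 ≤ d) (hdec : ∀ j < r, n (j + 1) < n j)
    (hbin : d = ∑ j ∈ Finset.range (r + 1), 2 ^ (n j))
    (s t : ℕ) (hst : s < t) (ht : t < d)
    (x : ℂ) (hx : ‖x‖ ≤ 1) :
    |hPoly d s t e (inner2 (Complex.I * (e s - e t)) x)| ≤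
      2 ^ (2 * r + 1) * d * ‖e s - e t‖ ^ ((d : ℤ) - 2) / 2 ^ (d - 2) :=
  stmt14_general e he d r n hdec hbin s t hst ht x hx
end
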